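/- arXiv:2107.10323 — 7 statements merged into one kernel-verified Lean document; each statement's English description precedes it below -/
import Mathlib

section
/- Lagrangian duality characterization of optimal mechanisms (Lemma 1): Let (q,t) be an IC-IR mechanism. Then (q,t) is optimal if and only if there exists a matrix λ = (λ_ji), j ∈ {1,…,n}, i ∈ {0,1,…,n}, such that: (i) λ_ji ≥ 0 for all j,i; (ii) f_i = Σ_{j=0}^n λ_ij − Σ_{j=1}^n λ_ji for all i ∈ {1,…,n} (flow conservation); (iii) (q_1,…,q_n) maximizes Σ_{i=1}^n f_i ⟨q'_i, φ_i^λ⟩ over all q'_1,…,q'_n ∈ [0,1]^d (virtual welfare maximization); and (iv) λ_ji · (⟨q_j, θ_j⟩ − t_j − ⟨q_i, θ_j⟩ + t_i) = 0 for all j ∈ {1,…,n}, i ∈ {0,1,…,n} (complementary slackness). -/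
open Finset

noncomputable section

/-! Common setup: a multiproduct monopoly with `d` goods (indexed `1,…,d`) and `n` buyer
types (indexed `1,…,n`, with `0` the outside option).  All vectors over goods/types are
encoded as functions `ℕ → ℝ`. -/

/-- Inner product `⟨x, y⟩ = ∑_{k=1}^d x_k y_k` over the goods `1,…,d`. -/
def dot (d : ℕ) (x y : ℕ → ℝ) : ℝ := ∑ k ∈ Finset.Icc 1 d, x k * y k

/-- `f` is a probability vector on types `1,…,n`. -/
def IsProb (n : ℕ) (f : ℕ → ℝ) : Prop :=
  (∀ i ∈ Finset.Icc 1 n, 0 < f i) ∧ ∑ i ∈ Finset.Icc 1 n, f i = 1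

/-- Cumulative distribution `F_i = ∑_{j=1}^i f_j` (so `F_0 = 0`). -/
def Fc (f : ℕ → ℝ) (i : ℕ) : ℝ := ∑ j ∈ Finset.Icc 1 i, f j

/-- `(q,t)` is a mechanism: `(q_0,t_0) = (0,0)` and `q_i ∈ [0,1]^d` for `i ∈ {1,…,n}`. -/
def IsMechanism (d n : ℕ) (q : ℕ → ℕ → ℝ) (t : ℕ → ℝ) : Prop :=
  (∀ k ∈ Finset.Icc 1 d, q 0 k = 0) ∧ t 0 = 0 ∧
    ∀ i ∈ Finset.Icc 1 n, ∀ k ∈ Finset.Icc 1 d, 0 ≤ q i k ∧ q i k ≤ 1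

/-- Incentive compatibility and individual rationality:
`⟨q_j, θ_j⟩ − t_j ≥ ⟨q_i, θ_j⟩ − t_i` for all `j ∈ {1,…,n}`, `i ∈ {0,…,n}`. -/
def ICIR (d n : ℕ) (θ : ℕ → ℕ → ℝ) (q : ℕ → ℕ → ℝ) (t : ℕ → ℝ) : Prop :=
  ∀ j ∈ Finset.Icc 1 n, ∀ i ∈ Finset.Icc 0 n,
    dot d (q j) (θ j) - t j ≥ dot d (q i) (θ j) - t i

/-- Expected revenue `∑_{i=1}^n f_i t_i`. -/
def revenue (n : ℕ) (f t : ℕ → ℝ) : ℝ := ∑ i ∈ Finset.Icc 1 n, f i * t i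

/-- A mechanism is optimal if it is an IC-IR mechanism whose revenue is at least that of
every IC-IR mechanism. -/
def Optimal (d n : ℕ) (θ : ℕ → ℕ → ℝ) (f : ℕ → ℝ) (q : ℕ → ℕ → ℝ) (t : ℕ → ℝ) : Prop :=
  IsMechanism d n q t ∧ ICIR d n θ q t ∧
    ∀ q' : ℕ → ℕ → ℝ, ∀ t' : ℕ → ℝ, IsMechanism d n q' t' → ICIR d n θ q' t' →
      revenue n f t' ≤ revenue n f t

/-- Upgrade pricing: `{q_0, q_1, …, q_n}` is totally ordered in the componentwise order. -/
def UpgradePricing (d n : ℕ) (q : ℕ → ℕ → ℝ) : Prop :=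
  ∀ i ∈ Finset.Icc 0 n, ∀ j ∈ Finset.Icc 0 n,
    (∀ k ∈ Finset.Icc 1 d, q i k ≤ q j k) ∨ (∀ k ∈ Finset.Icc 1 d, q j k ≤ q i k)

/-- `k`-th coordinate of the virtual value of type `i` under multipliers `lam`:
`φ_i^λ = θ_i − (1/f_i) ∑_{j=1}^n λ_{ji} (θ_j − θ_i)`. -/
def virt (n : ℕ) (θ : ℕ → ℕ → ℝ) (f : ℕ → ℝ) (lam : ℕ → ℕ → ℝ) (i k : ℕ) : ℝ :=
  θ i k - (1 / f i) * ∑ j ∈ Finset.Icc 1 n, lam j i * (θ j k - θ i k)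

/-- Nonnegativity of the multipliers `λ_{ji}`, `j ∈ {1,…,n}`, `i ∈ {0,…,n}`. -/
def NonnegLam (n : ℕ) (lam : ℕ → ℕ → ℝ) : Prop :=
  ∀ j ∈ Finset.Icc 1 n, ∀ i ∈ Finset.Icc 0 n, 0 ≤ lam j i

/-- Flow conservation: `f_i = ∑_{j=0}^n λ_{ij} − ∑_{j=1}^n λ_{ji}` for all `i ∈ {1,…,n}`. -/
def FlowConservation (n : ℕ) (f : ℕ → ℝ) (lam : ℕ → ℕ → ℝ) : Prop :=
  ∀ i ∈ Finset.Icc 1 n,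
    f i = ∑ j ∈ Finset.Icc 0 n, lam i j - ∑ j ∈ Finset.Icc 1 n, lam j i

/-- A flow is downward if `λ_{ji} > 0` with `j, i ∈ {1,…,n}` implies `j > i`. -/
def Downward (n : ℕ) (lam : ℕ → ℕ → ℝ) : Prop :=
  ∀ j ∈ Finset.Icc 1 n, ∀ i ∈ Finset.Icc 1 n, 0 < lam j i → i < j

/-- `q'` is a feasible allocation: `q'_i ∈ [0,1]^d` for `i ∈ {1,…,n}`. -/
def InUnitCube (d n : ℕ) (q : ℕ → ℕ → ℝ) : Prop :=
  ∀ i ∈ Finset.Icc 1 n, ∀ k ∈ Finset.Icc 1 d, 0 ≤ q i k ∧ q i k ≤ 1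

/-- Virtual welfare `∑_{i=1}^n f_i ⟨q_i, φ_i⟩` of an allocation `q` for virtual values `phi`. -/
def vw (d n : ℕ) (f : ℕ → ℝ) (phi : ℕ → ℕ → ℝ) (q : ℕ → ℕ → ℝ) : ℝ :=
  ∑ i ∈ Finset.Icc 1 n, f i * ∑ k ∈ Finset.Icc 1 d, q i k * phi i k

/-- Initial (Myersonian) virtual values: `φ_i = θ_i − ((1 − F_i)/f_i)(θ_{i+1} − θ_i)` for
`i < n`, and `φ_n = θ_n`. -/
def initVirt (n : ℕ) (θ : ℕ → ℕ → ℝ) (f : ℕ → ℝ) (i k : ℕ) : ℝ :=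
  if i < n then θ i k - ((1 - Fc f i) / f i) * (θ (i + 1) k - θ i k) else θ i k

/-- Pseudo-revenues `R_i^k = (1 − F_{i−1}) θ_i^k` for `i ∈ {1,…,n}`, with `R_{n+1}^k = 0`. -/
def pseudoRev (n : ℕ) (θ : ℕ → ℕ → ℝ) (f : ℕ → ℝ) (i k : ℕ) : ℝ :=
  if i ≤ n then (1 - Fc f (i - 1)) * θ i k else 0

/-- The cutoff allocation: `q_i^k = 1` iff `i ≥ i^k`. -/
def cutAlloc (cut : ℕ → ℕ) : ℕ → ℕ → ℝ := fun i k => if cut k ≤ i then 1 else 0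

/-- The instance is weakly monotone w.r.t. cutoffs `cut`:
`θ_i^k ≤ θ_j^k` whenever `i ≤ i^k ≤ j`. -/
def WeaklyMonotone (d n : ℕ) (θ : ℕ → ℕ → ℝ) (cut : ℕ → ℕ) : Prop :=
  ∀ k ∈ Finset.Icc 1 d, ∀ i ∈ Finset.Icc 1 n, ∀ j ∈ Finset.Icc 1 n,
    i ≤ cut k → cut k ≤ j → θ i k ≤ θ j k

/-- The instance is regular w.r.t. cutoffs `cut`:
`φ_i^k ≤ 0 ≤ φ_j^k` whenever `i ≤ i^k ≤ j`. -/
def Regular (d n : ℕ) (θ : ℕ → ℕ → ℝ) (f : ℕ → ℝ) (cut : ℕ → ℕ) : Prop :=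
  ∀ k ∈ Finset.Icc 1 d, ∀ i ∈ Finset.Icc 1 n, ∀ j ∈ Finset.Icc 1 n,
    i ≤ cut k → cut k ≤ j → initVirt n θ f i k ≤ 0 ∧ 0 ≤ initVirt n θ f j k

/-- Monotone types: `θ_i^k ≤ θ_j^k` for all `i ≤ j` and all goods `k`. -/
def MonotoneTypes (d n : ℕ) (θ : ℕ → ℕ → ℝ) : Prop :=
  ∀ i ∈ Finset.Icc 1 n, ∀ j ∈ Finset.Icc 1 n, i ≤ j → ∀ k ∈ Finset.Icc 1 d, θ i k ≤ θ j k

/-- Monotone marginal rates of substitution: all values are positive and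
`θ_i^l / θ_i^k ≤ θ_j^l / θ_j^k` whenever `i ≤ j` and `k ≤ l`. -/
def MonotoneMRS (d n : ℕ) (θ : ℕ → ℕ → ℝ) : Prop :=
  (∀ i ∈ Finset.Icc 1 n, ∀ k ∈ Finset.Icc 1 d, 0 < θ i k) ∧
    ∀ i ∈ Finset.Icc 1 n, ∀ j ∈ Finset.Icc 1 n, i ≤ j →
      ∀ k ∈ Finset.Icc 1 d, ∀ l ∈ Finset.Icc 1 d, k ≤ l →
        θ i l / θ i k ≤ θ j l / θ j k

/-- The initial flow `λ̂_{ji} = 1 − F_i` if `j = i + 1`, and `0` otherwise. -/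
def lamHat (f : ℕ → ℝ) : ℕ → ℕ → ℝ := fun j i => if j = i + 1 then 1 - Fc f i else 0

/-- Extended cutoffs: `i^0 = 1` and `i^{d+1} = n`. -/
def extCut (n d : ℕ) (cut : ℕ → ℕ) (k : ℕ) : ℕ :=
  if k = 0 then 1 else if k ≤ d then cut k else n

/-- The ironing update `λ'(γ)` of `lam` at type `i`:
`λ'_{ji} = γ λ_{ji}` and `λ'_{j(i−1)} = λ_{j(i−1)} + (1−γ) λ_{ji}` for `j > i`;
`λ'_{i(i−1)} = λ_{i(i−1)} − (1−γ) ∑_{j=i+1}^n λ_{ji}`; other entries unchanged. -/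
def ironUpdate (n : ℕ) (lam : ℕ → ℕ → ℝ) (i : ℕ) (γ : ℝ) : ℕ → ℕ → ℝ :=
  fun j r =>
    if i < j ∧ r = i then γ * lam j i
    else if i < j ∧ r = i - 1 then lam j (i - 1) + (1 - γ) * lam j i
    else if j = i ∧ r = i - 1 then
      lam i (i - 1) - (1 - γ) * ∑ j' ∈ Finset.Icc (i + 1) n, lam j' i
    else lam j r

/-- Pseudo-revenue associated to a flow: `R_i^{λ,k} = ∑_{j=i}^n f_j φ_j^{λ,k}`
(so `R_{n+1}^{λ,k} = 0`). -/
def flowRev (n : ℕ) (θ : ℕ → ℕ → ℝ) (f : ℕ → ℝ) (lam : ℕ → ℕ → ℝ) (i k : ℕ) : ℝ :=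
  ∑ j ∈ Finset.Icc i n, f j * virt n θ f lam j k

/-- A finite sequence `(R_i)_{i=1}^n` is quasi-concave: for some `i' ∈ {1,…,n}`,
`R_i ≥ R_j` whenever `i' ≤ i ≤ j` or `j ≤ i ≤ i'` (indices in `{1,…,n}`). -/
def QuasiConcaveSeq (n : ℕ) (R : ℕ → ℝ) : Prop :=
  ∃ i' ∈ Finset.Icc 1 n, ∀ i ∈ Finset.Icc 1 n, ∀ j ∈ Finset.Icc 1 n,
    ((i' ≤ i ∧ i ≤ j) ∨ (j ≤ i ∧ i ≤ i')) → R j ≤ R i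

/-- `Rbar` is the quasi-concave closure of `R` on `{1,…,n}`: the pointwise smallest
quasi-concave sequence dominating `R`. -/
def IsQCClosure (n : ℕ) (R Rbar : ℕ → ℝ) : Prop :=
  QuasiConcaveSeq n Rbar ∧ (∀ i ∈ Finset.Icc 1 n, R i ≤ Rbar i) ∧
    ∀ S : ℕ → ℝ, QuasiConcaveSeq n S → (∀ i ∈ Finset.Icc 1 n, R i ≤ S i) →
      ∀ i ∈ Finset.Icc 1 n, Rbar i ≤ S i

/-- `{a,…,b}` is a candidate ironing interval for the sequence `R` with closure `Rbar`:
an inclusion-maximal contiguous set of indices where `Rbar ≠ R`. -/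
def CandInterval (n : ℕ) (R Rbar : ℕ → ℝ) (a b : ℕ) : Prop :=
  1 ≤ a ∧ a ≤ b ∧ b ≤ n ∧ (∀ i, a ≤ i → i ≤ b → Rbar i ≠ R i) ∧
    (a = 1 ∨ Rbar (a - 1) = R (a - 1)) ∧ (b = n ∨ Rbar (b + 1) = R (b + 1))

/-- The instance is mostly regular w.r.t. cutoffs `cut`, where `Rbar · k` is the
quasi-concave closure of the pseudo-revenues of item `k`:
(1) no partial overlap of candidate ironing intervals of neighboring items;
(2) no candidate ironing interval contains a neighboring cutoff;
(3) not-too-shuffled values on candidate ironing intervals between cutoffs. -/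
def MostlyRegular (d n : ℕ) (θ : ℕ → ℕ → ℝ) (f : ℕ → ℝ) (cut : ℕ → ℕ)
    (Rbar : ℕ → ℕ → ℝ) : Prop :=
  ∀ k, 1 ≤ k → k + 1 ≤ d →
    (∀ a b c e,
      CandInterval n (fun i => pseudoRev n θ f i k) (fun i => Rbar i k) a b →
      CandInterval n (fun i => pseudoRev n θ f i (k + 1)) (fun i => Rbar i (k + 1)) c e →
      (b + 1 < c ∨ e + 1 < a ∨ (c < a ∧ b < e) ∨ (a < c ∧ e < b))) ∧
    (∀ a b,
      (CandInterval n (fun i => pseudoRev n θ f i k) (fun i => Rbar i k) a b ∨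
        CandInterval n (fun i => pseudoRev n θ f i (k + 1)) (fun i => Rbar i (k + 1)) a b) →
      ¬(a ≤ cut k ∧ cut k ≤ b) ∧ ¬(a ≤ cut (k + 1) ∧ cut (k + 1) ≤ b)) ∧
    (∀ a b,
      (CandInterval n (fun i => pseudoRev n θ f i k) (fun i => Rbar i k) a b ∨
        CandInterval n (fun i => pseudoRev n θ f i (k + 1)) (fun i => Rbar i (k + 1)) a b) →
      cut k + 1 ≤ a → b + 1 ≤ cut (k + 1) →
      ∀ i, a ≤ i → i ≤ b → θ a (k + 1) ≤ θ i (k + 1) ∧ θ b k ≤ θ (b + 1) k)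

/-- Allocation of the separate pricing mechanism at prices `p`:
`q_i^k = 1` iff `θ_i^k ≥ p_k` (and `q_0 = 0`). -/
def sepQ (θ : ℕ → ℕ → ℝ) (p : ℕ → ℝ) : ℕ → ℕ → ℝ :=
  fun i k => if i = 0 then 0 else if p k ≤ θ i k then 1 else 0

/-- Transfers of the separate pricing mechanism at prices `p`: `t_i = ∑_{k=1}^d p_k q_i^k`. -/
def sepT (d : ℕ) (θ : ℕ → ℕ → ℝ) (p : ℕ → ℝ) : ℕ → ℝ :=
  fun i => ∑ k ∈ Finset.Icc 1 d, p k * sepQ θ p i k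

/-!
Revenue maximization over IC-IR mechanisms is a linear program in `(q, t)`. For any
flow-conserving `λ`, every `(q, t)` with `(q₀, t₀) = (0, 0)` satisfies the Lagrangian identity
`revenue = ∑ᵢ fᵢ ⟨qᵢ, φᵢ^λ⟩ - ∑ⱼᵢ λⱼᵢ · slackⱼᵢ`, where `slackⱼᵢ ≥ 0` is the IC-IR constraint
of type `j` against item `i`. With `λ ≥ 0` this bounds the revenue of every IC-IR mechanism by
the maximal virtual welfare, and conditions (iii) and (iv) make `(q, t)` attain that bound.
Conversely, at an optimum the KKT conditions (from Farkas' lemma) provide multipliers `λ` for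
the IC-IR constraints and `μ, ν` for the bounds `0 ≤ q ≤ 1`. Stationarity in `t` is flow
conservation, stationarity in `q` reads `fᵢ φᵢ^{λ,k} = μᵢᵏ - νᵢᵏ`, and complementary slackness
for `μ, ν` makes `q` maximize virtual welfare.
-/

section LinearProgramming

variable {𝕜 E κ : Type*} [Field 𝕜] [LinearOrder 𝕜] [IsStrictOrderedRing 𝕜]
  [AddCommGroup E] [Module 𝕜 E]

theorem farkas_alternative (s : Finset κ) (a : κ → Module.Dual 𝕜 E) (b : Module.Dual 𝕜 E) :
    (∃ y : κ → 𝕜, (∀ j ∈ s, 0 ≤ y j) ∧ b = ∑ j ∈ s, y j • a j) ∨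
      ∃ x, (∀ j ∈ s, a j x ≤ 0) ∧ 0 < b x := by
  classical
  induction s using Finset.cons_induction generalizing a b with
  | empty =>
    by_cases hb : b = 0
    · exact Or.inl ⟨0, by simp, by simp [hb]⟩
    obtain ⟨x, hx⟩ : ∃ x, b x ≠ 0 := by
      by_contra! h
      exact hb (LinearMap.ext h)
    rcases hx.lt_or_gt with hneg | hpos
    · exact Or.inr ⟨-x, by simp, by simpa using hneg⟩
    · exact Or.inr ⟨x, by simp, hpos⟩
  | cons j₀ s hj₀ ih =>
    have extend : ∀ (y : κ → 𝕜) (μ : 𝕜), (∀ j ∈ s, 0 ≤ y j) → 0 ≤ μ →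
        b = μ • a j₀ + ∑ j ∈ s, y j • a j →
        ∃ y' : κ → 𝕜, (∀ j ∈ cons j₀ s hj₀, 0 ≤ y' j) ∧ b = ∑ j ∈ cons j₀ s hj₀, y' j • a j := by
      intro y μ hy hμ hb
      have hupd : ∀ j ∈ s, Function.update y j₀ μ j = y j := fun j hj =>
        Function.update_of_ne (ne_of_mem_of_not_mem hj hj₀) _ _
      refine ⟨Function.update y j₀ μ, (forall_mem_cons hj₀ _).2 ⟨by simpa using hμ, ?_⟩, ?_⟩
      · exact fun j hj => hupd j hj ▸ hy j hj
      · rw [sum_cons, Function.update_self, hb]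
        exact congrArg _ (sum_congr rfl fun j hj => by rw [hupd j hj])
    rcases ih a b with ⟨y, hy, hb⟩ | ⟨x, hx, hbx⟩
    · exact Or.inl (extend y 0 hy le_rfl (by rw [hb, zero_smul, zero_add]))
    rcases le_or_gt (a j₀ x) 0 with hx₀ | hx₀
    · exact Or.inr ⟨x, (forall_mem_cons hj₀ _).2 ⟨hx₀, hx⟩, hbx⟩
    -- `p` projects a functional onto the functionals vanishing at `x`, along `a j₀`
    set p : Module.Dual 𝕜 E → Module.Dual 𝕜 E := fun u => u - (u x / a j₀ x) • a j₀ with hp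
    rcases ih (p ∘ a) (p b) with ⟨y, hy, hb⟩ | ⟨z, hz, hbz⟩
    · set μ := b x / a j₀ x - ∑ j ∈ s, y j * (a j x / a j₀ x)
      have hμ : 0 ≤ μ := by
        have : ∑ j ∈ s, y j * (a j x / a j₀ x) ≤ 0 :=
          sum_nonpos fun j hj => mul_nonpos_of_nonneg_of_nonpos (hy j hj)
            (div_nonpos_of_nonpos_of_nonneg (hx j hj) hx₀.le)
        have : 0 < b x / a j₀ x := div_pos hbx hx₀
        linarith
      refine Or.inl (extend y μ hy hμ ?_)
      simp only [hp, Function.comp_apply, smul_sub, smul_smul, sum_sub_distrib, ← sum_smul] at hb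
      rw [sub_eq_iff_eq_add] at hb
      rw [hb]
      module
    · set w := z - (a j₀ z / a j₀ x) • x
      have hpw : ∀ u, p u z = u w := fun u => by
        simp only [hp, w, LinearMap.sub_apply, LinearMap.smul_apply, map_sub, map_smul,
          smul_eq_mul]
        ring
      refine Or.inr ⟨w, (forall_mem_cons hj₀ _).2 ⟨?_, fun j hj => hpw (a j) ▸ hz j hj⟩, hpw b ▸ hbz⟩
      rw [← hpw]
      simp [hp, hx₀.ne']

open Filter Topology in
theorem exists_kkt_multipliers [TopologicalSpace 𝕜] [OrderTopology 𝕜] (s : Finset κ) (a : κ → Module.Dual 𝕜 E) (b : κ → 𝕜)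
    (c : Module.Dual 𝕜 E) (x₀ : E) (hfeas : ∀ j ∈ s, a j x₀ ≤ b j)
    (hmax : ∀ x, (∀ j ∈ s, a j x ≤ b j) → c x ≤ c x₀) :
    ∃ y : κ → 𝕜, (∀ j ∈ s, 0 ≤ y j) ∧ c = ∑ j ∈ s, y j • a j ∧
      ∀ j ∈ s, y j * (b j - a j x₀) = 0 := by
  rcases farkas_alternative (s.filter fun j => a j x₀ = b j) a c with
    ⟨y, hy, hc⟩ | ⟨x, hx, hcx⟩
  · refine ⟨fun j => if a j x₀ = b j then y j else 0, fun j hj => ?_, ?_, fun j _ => ?_⟩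
    · dsimp only
      split_ifs with h
      · exact hy j (mem_filter.2 ⟨hj, h⟩)
      · exact le_rfl
    · rw [hc, sum_filter]
      exact sum_congr rfl fun j _ => by rw [ite_smul, zero_smul]
    · dsimp only
      split_ifs with h <;> simp [h]
  · -- a small step from `x₀` along `x` stays feasible and increases `c`
    have hstep : ∀ᶠ ε in 𝓝[>] (0 : 𝕜), ∀ j ∈ s, a j (x₀ + ε • x) ≤ b j := by
      rw [eventually_all_finset]
      intro j hj
      simp only [map_add, map_smul, smul_eq_mul]
      rcases (hfeas j hj).eq_or_lt with hactive | hslack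
      · filter_upwards [self_mem_nhdsWithin] with ε (hε : 0 < ε)
        nlinarith [hx j (mem_filter.2 ⟨hj, hactive⟩)]
      · have hlim : Tendsto (fun ε => a j x₀ + ε * a j x) (𝓝[>] 0) (𝓝 (a j x₀)) :=
          tendsto_nhdsWithin_of_tendsto_nhds <|
            (continuous_const.add (continuous_id.mul continuous_const)).tendsto' _ _ (by simp)
        exact (hlim.eventually (gt_mem_nhds hslack)).mono fun _ => le_of_lt
    obtain ⟨ε, hε, hεpos : 0 < ε⟩ := (hstep.and self_mem_nhdsWithin).exists
    have := hmax _ hε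
    simp only [map_add, map_smul, smul_eq_mul] at this
    nlinarith

end LinearProgramming

section Mechanism

def icSlack (d : ℕ) (θ q : ℕ → ℕ → ℝ) (t : ℕ → ℝ) (j i : ℕ) : ℝ :=
  dot d (q j) (θ j) - t j - dot d (q i) (θ j) + t i

variable {d n : ℕ} {θ : ℕ → ℕ → ℝ} {f : ℕ → ℝ} {lam : ℕ → ℕ → ℝ}

lemma sum_Icc_zero_eq_add {M : Type*} [AddCommMonoid M] (n : ℕ) (g : ℕ → M) :
    ∑ i ∈ Icc 0 n, g i = g 0 + ∑ i ∈ Icc 1 n, g i := by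
  rw [← insert_Icc_add_one_left_eq_Icc n.zero_le, sum_insert (by simp), zero_add]

lemma dot_eq_zero_of_forall_eq_zero {x : ℕ → ℝ} (hx : ∀ k ∈ Icc 1 d, x k = 0) (y : ℕ → ℝ) :
    dot d x y = 0 :=
  sum_eq_zero fun k hk => by rw [hx k hk, zero_mul]

lemma sum_mul_sub_eq_sum_mul_netOutflow (lam : ℕ → ℕ → ℝ) {u : ℕ → ℝ} (hu : u 0 = 0) :
    ∑ j ∈ Icc 1 n, ∑ i ∈ Icc 0 n, lam j i * (u j - u i)
      = ∑ m ∈ Icc 1 n, u m * (∑ i ∈ Icc 0 n, lam m i - ∑ j ∈ Icc 1 n, lam j m) := by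
  have hin : ∑ j ∈ Icc 1 n, ∑ i ∈ Icc 0 n, lam j i * u i
      = ∑ m ∈ Icc 1 n, u m * ∑ j ∈ Icc 1 n, lam j m := by
    rw [sum_comm, sum_Icc_zero_eq_add, hu]
    simp only [mul_zero, sum_const_zero, zero_add, mul_sum, mul_comm]
  simp only [mul_sub, sum_sub_distrib, hin, ← sum_mul, mul_comm]

lemma mul_dot_virt_eq {m : ℕ} (hfm : f m ≠ 0) (q : ℕ → ℕ → ℝ) :
    f m * dot d (q m) (virt n θ f lam m) = f m * dot d (q m) (θ m)
      - ∑ j ∈ Icc 1 n, lam j m * (dot d (q m) (θ j) - dot d (q m) (θ m)) := by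
  have hvirt : ∀ k, f m * virt n θ f lam m k
      = f m * θ m k - ∑ j ∈ Icc 1 n, lam j m * (θ j k - θ m k) := fun k => by
    rw [virt, mul_sub, ← mul_assoc, mul_one_div_cancel hfm, one_mul]
  calc f m * dot d (q m) (virt n θ f lam m)
      = ∑ k ∈ Icc 1 d, (f m * (q m k * θ m k)
          - ∑ j ∈ Icc 1 n, lam j m * (q m k * θ j k - q m k * θ m k)) := by
        rw [dot, mul_sum]
        refine sum_congr rfl fun k _ => ?_
        rw [mul_left_comm, hvirt, mul_sub, mul_sum]
        congr 1
        · ring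
        · exact sum_congr rfl fun j _ => by ring
    _ = _ := by
        rw [sum_sub_distrib, ← mul_sum, sum_comm]
        exact congrArg _ (sum_congr rfl fun j _ => by rw [dot, dot, ← sum_sub_distrib, mul_sum])

theorem vw_virt_eq_sum_mul_dot_sub (hf : ∀ i ∈ Icc 1 n, f i ≠ 0)
    (hflow : FlowConservation n f lam) {q : ℕ → ℕ → ℝ} (hq₀ : ∀ k ∈ Icc 1 d, q 0 k = 0) :
    vw d n f (virt n θ f lam) q = ∑ j ∈ Icc 1 n, ∑ i ∈ Icc 0 n,
      lam j i * (dot d (q j) (θ j) - dot d (q i) (θ j)) := by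
  calc vw d n f (virt n θ f lam) q
      = ∑ m ∈ Icc 1 n, ((∑ i ∈ Icc 0 n, lam m i) * dot d (q m) (θ m)
          - ∑ j ∈ Icc 1 n, lam j m * dot d (q m) (θ j)) :=
        sum_congr rfl fun m hm => (mul_dot_virt_eq (hf m hm) q).trans <| by
          rw [show ∑ i ∈ Icc 0 n, lam m i = f m + ∑ j ∈ Icc 1 n, lam j m by
            linarith [hflow m hm]]
          simp only [mul_sub, sum_sub_distrib, add_mul, sum_mul]
          ring
    _ = _ := by
        simp only [mul_sub, sum_sub_distrib, ← sum_mul]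
        rw [sum_comm (s := Icc 1 n) (t := Icc 0 n), sum_Icc_zero_eq_add]
        simp only [dot_eq_zero_of_forall_eq_zero hq₀, mul_zero, sum_const_zero, zero_add]

theorem revenue_eq_vw_sub_sum_icSlack (hf : ∀ i ∈ Icc 1 n, f i ≠ 0)
    (hflow : FlowConservation n f lam) {q : ℕ → ℕ → ℝ} {t : ℕ → ℝ}
    (hq₀ : ∀ k ∈ Icc 1 d, q 0 k = 0) (ht₀ : t 0 = 0) :
    revenue n f t = vw d n f (virt n θ f lam) q
      - ∑ j ∈ Icc 1 n, ∑ i ∈ Icc 0 n, lam j i * icSlack d θ q t j i := by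
  have htransfer : ∑ j ∈ Icc 1 n, ∑ i ∈ Icc 0 n, lam j i * (t j - t i) = revenue n f t := by
    rw [sum_mul_sub_eq_sum_mul_netOutflow lam ht₀, revenue]
    exact sum_congr rfl fun m hm => by rw [← hflow m hm, mul_comm]
  rw [eq_sub_iff_add_eq, vw_virt_eq_sum_mul_dot_sub hf hflow hq₀, ← htransfer, ← sum_add_distrib]
  refine sum_congr rfl fun j _ => ?_
  rw [← sum_add_distrib]
  exact sum_congr rfl fun i _ => by rw [icSlack]; ring

theorem revenue_le_vw (hf : ∀ i ∈ Icc 1 n, f i ≠ 0) (hnn : NonnegLam n lam)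
    (hflow : FlowConservation n f lam) {q : ℕ → ℕ → ℝ} {t : ℕ → ℝ}
    (hmech : IsMechanism d n q t) (hic : ICIR d n θ q t) :
    revenue n f t ≤ vw d n f (virt n θ f lam) q := by
  rw [revenue_eq_vw_sub_sum_icSlack hf hflow hmech.1 hmech.2.1, sub_le_self_iff]
  refine sum_nonneg fun j hj => sum_nonneg fun i hi => mul_nonneg (hnn j hj i hi) ?_
  have := hic j hj i hi
  rw [icSlack]
  linarith

theorem optimal_of_multipliers (hf : ∀ i ∈ Icc 1 n, f i ≠ 0) {q : ℕ → ℕ → ℝ} {t : ℕ → ℝ}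
    (hmech : IsMechanism d n q t) (hic : ICIR d n θ q t) (hnn : NonnegLam n lam)
    (hflow : FlowConservation n f lam)
    (hmax : ∀ q', InUnitCube d n q' → vw d n f (virt n θ f lam) q' ≤ vw d n f (virt n θ f lam) q)
    (hcs : ∀ j ∈ Icc 1 n, ∀ i ∈ Icc 0 n, lam j i * icSlack d θ q t j i = 0) :
    Optimal d n θ f q t := by
  refine ⟨hmech, hic, fun q' t' hmech' hic' => ?_⟩
  calc revenue n f t' ≤ vw d n f (virt n θ f lam) q' := revenue_le_vw hf hnn hflow hmech' hic'
    _ ≤ vw d n f (virt n θ f lam) q := hmax q' hmech'.2.2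
    _ = revenue n f t := by
      rw [revenue_eq_vw_sub_sum_icSlack hf hflow hmech.1 hmech.2.1,
        sum_eq_zero fun j hj => sum_eq_zero (hcs j hj), sub_zero]

end Mechanism

section RevenueLP

variable {d n : ℕ} {θ : ℕ → ℕ → ℝ} {f : ℕ → ℝ}

/-- Type `j`'s utility for the menu item of type `i`, on the space of points `x = (q, t)`;
item `0` is read as the outside option `(0, 0)`, whatever `x` is at index `0`. -/
def menuUtility (d : ℕ) (θ : ℕ → ℕ → ℝ) (j i : ℕ) :
    Module.Dual ℝ ((ℕ → ℕ → ℝ) × (ℕ → ℝ)) where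
  toFun x := if i = 0 then 0 else dot d (x.1 i) (θ j) - x.2 i
  map_add' x y := by
    split_ifs
    · simp
    · simp only [Prod.fst_add, Prod.snd_add, Pi.add_apply, dot, add_mul, sum_add_distrib]
      ring
  map_smul' c x := by
    split_ifs
    · simp
    · simp only [Prod.smul_fst, Prod.smul_snd, Pi.smul_apply, smul_eq_mul, dot, mul_assoc,
        ← mul_sum, RingHom.id_apply]
      ring

def revenueForm (n : ℕ) (f : ℕ → ℝ) : Module.Dual ℝ ((ℕ → ℕ → ℝ) × (ℕ → ℝ)) where
  toFun x := revenue n f x.2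
  map_add' x y := by simp only [revenue, Prod.snd_add, Pi.add_apply, mul_add, sum_add_distrib]
  map_smul' c x := by
    simp only [revenue, Prod.smul_snd, Pi.smul_apply, smul_eq_mul, mul_sum, RingHom.id_apply]
    exact sum_congr rfl fun i _ => by ring

@[simp]
lemma revenueForm_apply (x : (ℕ → ℕ → ℝ) × (ℕ → ℝ)) : revenueForm n f x = revenue n f x.2 :=
  rfl

def allocCoord (i k : ℕ) : Module.Dual ℝ ((ℕ → ℕ → ℝ) × (ℕ → ℝ)) :=
  LinearMap.proj k ∘ₗ LinearMap.proj i ∘ₗ LinearMap.fst ℝ _ _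

/-- Rows `lpRow c x ≤ lpBound c` of the revenue LP in `x = (q, t)`: `inl (j, i)` is the IC-IR
constraint of type `j` against item `i`, while `inr (inl (i, k))` and `inr (inr (i, k))` are
`q_i^k ≤ 1` and `0 ≤ q_i^k`. -/
def lpRow (d : ℕ) (θ : ℕ → ℕ → ℝ) :
    (ℕ × ℕ) ⊕ (ℕ × ℕ) ⊕ (ℕ × ℕ) → Module.Dual ℝ ((ℕ → ℕ → ℝ) × (ℕ → ℝ))
  | .inl (j, i) => menuUtility d θ j i - menuUtility d θ j j
  | .inr (.inl (i, k)) => allocCoord i k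
  | .inr (.inr (i, k)) => -allocCoord i k

def lpBound : (ℕ × ℕ) ⊕ (ℕ × ℕ) ⊕ (ℕ × ℕ) → ℝ
  | .inr (.inl _) => 1
  | _ => 0

def lpIndex (d n : ℕ) : Finset ((ℕ × ℕ) ⊕ (ℕ × ℕ) ⊕ (ℕ × ℕ)) :=
  (Icc 1 n ×ˢ Icc 0 n).disjSum ((Icc 1 n ×ˢ Icc 1 d).disjSum (Icc 1 n ×ˢ Icc 1 d))

lemma menuUtility_apply_of_outside {q : ℕ → ℕ → ℝ} {t : ℕ → ℝ}
    (hq₀ : ∀ k ∈ Icc 1 d, q 0 k = 0) (ht₀ : t 0 = 0) (j i : ℕ) :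
    menuUtility d θ j i (q, t) = dot d (q i) (θ j) - t i := by
  change (if i = 0 then 0 else _) = _
  split_ifs with hi
  · rw [hi, dot_eq_zero_of_forall_eq_zero hq₀, ht₀, sub_zero]
  · rfl

lemma menuUtility_apply (x : (ℕ → ℕ → ℝ) × (ℕ → ℝ)) (j i : ℕ) :
    menuUtility d θ j i x
      = dot d (Function.update x.1 0 0 i) (θ j) - Function.update x.2 0 0 i := by
  change (if i = 0 then 0 else _) = _
  split_ifs with hi
  · simp [hi, dot]
  · simp only [Function.update_of_ne hi]

lemma lpRow_inl_apply_of_outside {q : ℕ → ℕ → ℝ} {t : ℕ → ℝ}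
    (hq₀ : ∀ k ∈ Icc 1 d, q 0 k = 0) (ht₀ : t 0 = 0) (j i : ℕ) :
    lpRow d θ (.inl (j, i)) (q, t) = -icSlack d θ q t j i := by
  simp only [lpRow, LinearMap.sub_apply, menuUtility_apply_of_outside hq₀ ht₀, icSlack]
  ring

lemma lpRow_le_lpBound_of_icir {q : ℕ → ℕ → ℝ} {t : ℕ → ℝ} (hmech : IsMechanism d n q t)
    (hic : ICIR d n θ q t) : ∀ c ∈ lpIndex d n, lpRow d θ c (q, t) ≤ lpBound c := by
  rintro (⟨j, i⟩ | ⟨i, k⟩ | ⟨i, k⟩) hc <;>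
    simp only [lpIndex, inl_mem_disjSum, inr_mem_disjSum, mem_product] at hc
  · rw [lpRow_inl_apply_of_outside hmech.1 hmech.2.1]
    have := hic j hc.1 i hc.2
    simp only [lpBound, icSlack]
    linarith
  · exact (hmech.2.2 i hc.1 k hc.2).2
  · exact neg_nonpos.2 (hmech.2.2 i hc.1 k hc.2).1

lemma revenueForm_le_of_optimal {q : ℕ → ℕ → ℝ} {t : ℕ → ℝ} (hopt : Optimal d n θ f q t)
    (x : (ℕ → ℕ → ℝ) × (ℕ → ℝ)) (hx : ∀ c ∈ lpIndex d n, lpRow d θ c x ≤ lpBound c) :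
    revenueForm n f x ≤ revenueForm n f (q, t) := by
  have hmech : IsMechanism d n (Function.update x.1 0 0) (Function.update x.2 0 0) := by
    refine ⟨fun k _ => by simp, by simp, fun i hi k hk => ?_⟩
    have hle := hx (.inr (.inl (i, k))) (by simp [lpIndex, hi, hk])
    have hge := hx (.inr (.inr (i, k))) (by simp [lpIndex, hi, hk])
    simp only [lpRow, lpBound, allocCoord, LinearMap.neg_apply, LinearMap.coe_comp,
      Function.comp_apply, LinearMap.fst_apply, LinearMap.proj_apply] at hle hge
    rw [Function.update_of_ne (by simp at hi; omega)]
    exact ⟨by linarith, hle⟩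
  have hic : ICIR d n θ (Function.update x.1 0 0) (Function.update x.2 0 0) := by
    intro j hj i hi
    have := hx (.inl (j, i)) (by simp [lpIndex, hj, hi])
    simp only [lpRow, lpBound, LinearMap.sub_apply, menuUtility_apply] at this
    linarith
  rw [revenueForm_apply, revenueForm_apply]
  calc revenue n f x.2 = revenue n f (Function.update x.2 0 0) :=
        sum_congr rfl fun i hi => by
          rw [Function.update_of_ne (show i ≠ 0 by simp at hi; omega)]
    _ ≤ revenue n f t := hopt.2.2 _ _ hmech hic

theorem exists_kkt_multipliers_of_optimal {q : ℕ → ℕ → ℝ} {t : ℕ → ℝ} (hopt : Optimal d n θ f q t) :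
    ∃ lam μ ν : ℕ → ℕ → ℝ, NonnegLam n lam ∧
      (∀ j ∈ Icc 1 n, ∀ i ∈ Icc 0 n, lam j i * icSlack d θ q t j i = 0) ∧
      (∀ i ∈ Icc 1 n, ∀ k ∈ Icc 1 d,
        0 ≤ μ i k ∧ 0 ≤ ν i k ∧ μ i k * (1 - q i k) = 0 ∧ ν i k * q i k = 0) ∧
      ∀ q' t', (∀ k ∈ Icc 1 d, q' 0 k = 0) → t' 0 = 0 →
        revenue n f t' = ∑ i ∈ Icc 1 n, ∑ k ∈ Icc 1 d, (μ i k - ν i k) * q' i k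
          - ∑ j ∈ Icc 1 n, ∑ i ∈ Icc 0 n, lam j i * icSlack d θ q' t' j i := by
  obtain ⟨y, hy, hrep, hcs⟩ := exists_kkt_multipliers (lpIndex d n) (lpRow d θ) lpBound
    (revenueForm n f) (q, t) (lpRow_le_lpBound_of_icir hopt.1 hopt.2.1)
    (revenueForm_le_of_optimal hopt)
  refine ⟨fun j i => y (.inl (j, i)), fun i k => y (.inr (.inl (i, k))),
    fun i k => y (.inr (.inr (i, k))), fun j hj i hi => hy _ (by simp [lpIndex, hj, hi]),
    fun j hj i hi => ?_, fun i hi k hk => ?_, fun q' t' hq'₀ ht'₀ => ?_⟩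
  · have := hcs (.inl (j, i)) (by simp [lpIndex, hj, hi])
    rw [lpRow_inl_apply_of_outside hopt.1.1 hopt.1.2.1] at this
    simpa [lpBound] using this
  · have hle := hcs (.inr (.inl (i, k))) (by simp [lpIndex, hi, hk])
    have hge := hcs (.inr (.inr (i, k))) (by simp [lpIndex, hi, hk])
    simp only [lpRow, lpBound, allocCoord, LinearMap.neg_apply, LinearMap.coe_comp,
      Function.comp_apply, LinearMap.fst_apply, LinearMap.proj_apply] at hle hge
    refine ⟨hy _ (by simp [lpIndex, hi, hk]), hy _ (by simp [lpIndex, hi, hk]), hle, ?_⟩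
    simpa using hge
  · have := LinearMap.congr_fun hrep (q', t')
    rw [LinearMap.sum_apply] at this
    simp only [revenueForm_apply, LinearMap.smul_apply, smul_eq_mul, lpIndex,
      sum_disjSum, sum_product, lpRow_inl_apply_of_outside hq'₀ ht'₀] at this
    rw [this]
    simp only [lpRow, allocCoord, LinearMap.neg_apply, LinearMap.coe_comp,
      Function.comp_apply, LinearMap.fst_apply, LinearMap.proj_apply, mul_neg, sum_neg_distrib,
      sub_mul, sum_sub_distrib]
    ring

end RevenueLP

section Duality

variable {d n : ℕ} {θ : ℕ → ℕ → ℝ} {f : ℕ → ℝ}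

theorem flowConservation_of_forall_revenue_eq {lam : ℕ → ℕ → ℝ}
    (hrep : ∀ t : ℕ → ℝ, t 0 = 0 →
      revenue n f t = ∑ j ∈ Icc 1 n, ∑ i ∈ Icc 0 n, lam j i * (t j - t i)) :
    FlowConservation n f lam := by
  intro m hm
  have hm₀ : m ≠ 0 := by simp at hm; omega
  have := hrep (Pi.single m 1) (Pi.single_eq_of_ne hm₀.symm 1)
  rw [sum_mul_sub_eq_sum_mul_netOutflow lam (Pi.single_eq_of_ne hm₀.symm 1)] at this
  simpa [revenue, Pi.single_apply, hm] using this

theorem exists_multipliers_of_optimal (hf : ∀ i ∈ Icc 1 n, f i ≠ 0) {q : ℕ → ℕ → ℝ}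
    {t : ℕ → ℝ} (hopt : Optimal d n θ f q t) :
    ∃ lam : ℕ → ℕ → ℝ, NonnegLam n lam ∧ FlowConservation n f lam ∧
      (∀ q', InUnitCube d n q' →
        vw d n f (virt n θ f lam) q' ≤ vw d n f (virt n θ f lam) q) ∧
      ∀ j ∈ Icc 1 n, ∀ i ∈ Icc 0 n, lam j i * icSlack d θ q t j i = 0 := by
  obtain ⟨lam, μ, ν, hnn, hcs, hbox, hrep⟩ := exists_kkt_multipliers_of_optimal hopt
  have hflow : FlowConservation n f lam := flowConservation_of_forall_revenue_eq fun t' ht' => by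
    rw [hrep 0 t' (fun _ _ => rfl) ht']
    simp only [icSlack, dot, Pi.zero_apply, zero_mul, mul_zero, sum_const_zero, sub_zero,
      zero_sub, ← sum_neg_distrib]
    exact sum_congr rfl fun j _ => sum_congr rfl fun i _ => by ring
  have hvw : ∀ q', vw d n f (virt n θ f lam) q'
      = ∑ i ∈ Icc 1 n, ∑ k ∈ Icc 1 d, (μ i k - ν i k) * q' i k := fun q' => by
    have hq'₀ : ∀ k ∈ Icc 1 d, Function.update q' 0 0 0 k = 0 := fun _ _ => by simp
    have hsame : ∀ i ∈ Icc 1 n, Function.update q' 0 0 i = q' i := fun i hi =>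
      Function.update_of_ne (by simp at hi; omega) _ _
    have hlag := revenue_eq_vw_sub_sum_icSlack (θ := θ) hf hflow hq'₀ (t := 0) rfl
    rw [hrep _ 0 hq'₀ rfl] at hlag
    have hvw_eq : vw d n f (virt n θ f lam) (Function.update q' 0 0)
        = vw d n f (virt n θ f lam) q' := sum_congr rfl fun i hi => by rw [hsame i hi]
    have hsum_eq : ∑ i ∈ Icc 1 n, ∑ k ∈ Icc 1 d, (μ i k - ν i k) * Function.update q' 0 0 i k
        = ∑ i ∈ Icc 1 n, ∑ k ∈ Icc 1 d, (μ i k - ν i k) * q' i k :=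
      sum_congr rfl fun i hi => by rw [hsame i hi]
    linarith
  refine ⟨lam, hnn, hflow, fun q' hq' => ?_, hcs⟩
  rw [hvw, hvw]
  refine sum_le_sum fun i hi => sum_le_sum fun k hk => ?_
  obtain ⟨hμ, hν, hμq, hνq⟩ := hbox i hi k hk
  obtain ⟨h0, h1⟩ := hq' i hi k hk
  nlinarith [mul_nonneg hμ (sub_nonneg.2 h1), mul_nonneg hν h0]

end Duality

theorem lagrangian_duality_general
    (d n : ℕ)
    (θ : ℕ → ℕ → ℝ)
    (f : ℕ → ℝ) (hf : IsProb n f)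
    (q : ℕ → ℕ → ℝ) (t : ℕ → ℝ)
    (hmech : IsMechanism d n q t) (hic : ICIR d n θ q t) :
    Optimal d n θ f q t ↔
      ∃ lam : ℕ → ℕ → ℝ,
        NonnegLam n lam ∧
        FlowConservation n f lam ∧
        (∀ q' : ℕ → ℕ → ℝ, InUnitCube d n q' →
          vw d n f (virt n θ f lam) q' ≤ vw d n f (virt n θ f lam) q) ∧
        (∀ j ∈ Finset.Icc 1 n, ∀ i ∈ Finset.Icc 0 n,
          lam j i * (dot d (q j) (θ j) - t j - dot d (q i) (θ j) + t i) = 0) := by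
  have hf₀ : ∀ i ∈ Icc 1 n, f i ≠ 0 := fun i hi => (hf.1 i hi).ne'
  constructor
  · exact exists_multipliers_of_optimal hf₀
  · rintro ⟨lam, hnn, hflow, hmax, hcs⟩
    exact optimal_of_multipliers hf₀ hmech hic hnn hflow hmax hcs

/-- **Lemma 1 (Lagrangian duality characterization of optimal mechanisms).**
An IC-IR mechanism `(q,t)` is optimal iff there exist multipliers `λ_{ji}` that are
nonnegative, conserve flow, make the allocation `q` maximize virtual welfare, and
satisfy complementary slackness. -/
theorem lagrangian_duality
    (d n : ℕ) (hd : 1 ≤ d) (hn : 1 ≤ n)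
    (θ : ℕ → ℕ → ℝ) (hθ : ∀ i ∈ Finset.Icc 1 n, ∀ k ∈ Finset.Icc 1 d, 0 ≤ θ i k)
    (f : ℕ → ℝ) (hf : IsProb n f)
    (q : ℕ → ℕ → ℝ) (t : ℕ → ℝ)
    (hmech : IsMechanism d n q t) (hic : ICIR d n θ q t) :
    Optimal d n θ f q t ↔
      ∃ lam : ℕ → ℕ → ℝ,
        NonnegLam n lam ∧
        FlowConservation n f lam ∧
        (∀ q' : ℕ → ℕ → ℝ, InUnitCube d n q' →
          vw d n f (virt n θ f lam) q' ≤ vw d n f (virt n θ f lam) q) ∧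
        (∀ j ∈ Finset.Icc 1 n, ∀ i ∈ Finset.Icc 0 n,
          lam j i * (dot d (q j) (θ j) - t j - dot d (q i) (θ j) + t i) = 0) :=
  lagrangian_duality_general d n θ f hf q t hmech hic
end
end

section
/- Weak duality bound: For every IC-IR mechanism (q,t) and every flow λ (i.e., λ_ji ≥ 0 for all j ∈ {1,…,n}, i ∈ {0,1,…,n}, and f_i = Σ_{j=0}^n λ_ij − Σ_{j=1}^n λ_ji for all i ∈ {1,…,n}), the revenue satisfies Σ_{i=1}^n f_i t_i ≤ Σ_{i=1}^n f_i Σ_{k=1}^d max(φ_i^{λ,k}, 0). -/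
open Finset

noncomputable section

/-! Flow conservation `f_i = ∑_j λ_ij − ∑_j λ_ji` rewrites `∑_i f_i s_i` as the flow-weighted sum
`∑_j ∑_i λ_ji (s_j − s_i)` for any `s` vanishing at the outside option. Applied to the payments,
IC bounds each `t_j − t_i` by the utility difference `⟨q_j − q_i, θ_j⟩`; applying the identity
again to the surplus `⟨q_i, θ_i⟩` regroups the bound into the virtual welfare
`∑_i f_i ⟨q_i, φ_i^λ⟩`, and `q_i ∈ [0,1]^d` bounds `⟨q_i, φ_i^λ⟩` by `∑_k max(φ_i^{λ,k}, 0)`. -/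

theorem sum_Icc_zero_eq_sum_Icc_one {M : Type*} [AddCommMonoid M] {g : ℕ → M} (hg : g 0 = 0)
    (n : ℕ) : ∑ i ∈ Icc 0 n, g i = ∑ i ∈ Icc 1 n, g i := by
  rw [← insert_Icc_add_one_left_eq_Icc n.zero_le, sum_insert (by simp), hg, zero_add, zero_add]

theorem dot_eq_zero_of_left {d : ℕ} {x : ℕ → ℝ} (hx : ∀ k ∈ Icc 1 d, x k = 0) (y : ℕ → ℝ) :
    dot d x y = 0 :=
  sum_eq_zero fun k hk => by rw [hx k hk, zero_mul]

theorem dot_sub_right (d : ℕ) (x y z : ℕ → ℝ) : dot d x (y - z) = dot d x y - dot d x z := by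
  simp only [dot, Pi.sub_apply, mul_sub, sum_sub_distrib]

section Flow

variable {n : ℕ} {f : ℕ → ℝ} {lam : ℕ → ℕ → ℝ}

theorem FlowConservation.sum_mul_eq (hflow : FlowConservation n f lam) {s : ℕ → ℝ}
    (hs : s 0 = 0) :
    ∑ j ∈ Icc 1 n, f j * s j = ∑ j ∈ Icc 1 n, ∑ i ∈ Icc 0 n, lam j i * (s j - s i) := by
  have inflow : ∑ j ∈ Icc 1 n, ∑ i ∈ Icc 1 n, lam i j * s j
      = ∑ j ∈ Icc 1 n, ∑ i ∈ Icc 0 n, lam j i * s i := by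
    rw [sum_comm]
    exact sum_congr rfl fun j _ => (sum_Icc_zero_eq_sum_Icc_one (by rw [hs, mul_zero]) n).symm
  calc ∑ j ∈ Icc 1 n, f j * s j
      = ∑ j ∈ Icc 1 n, (∑ i ∈ Icc 0 n, lam j i - ∑ i ∈ Icc 1 n, lam i j) * s j :=
        sum_congr rfl fun j hj => by rw [← hflow j hj]
    _ = ∑ j ∈ Icc 1 n, ∑ i ∈ Icc 0 n, lam j i * s j
          - ∑ j ∈ Icc 1 n, ∑ i ∈ Icc 1 n, lam i j * s j := by
        simp only [sub_mul, sum_mul, sum_sub_distrib]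
    _ = ∑ j ∈ Icc 1 n, ∑ i ∈ Icc 0 n, lam j i * (s j - s i) := by
        simp only [inflow, mul_sub, sum_sub_distrib]

theorem revenue_le_sum_flow_utility_sub {d : ℕ} {θ q : ℕ → ℕ → ℝ} {t : ℕ → ℝ}
    (hmech : IsMechanism d n q t) (hic : ICIR d n θ q t) (hnn : NonnegLam n lam)
    (hflow : FlowConservation n f lam) :
    revenue n f t ≤ ∑ j ∈ Icc 1 n, ∑ i ∈ Icc 0 n,
      lam j i * (dot d (q j) (θ j) - dot d (q i) (θ j)) := by
  rw [revenue, hflow.sum_mul_eq hmech.2.1]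
  exact sum_le_sum fun j hj => sum_le_sum fun i hi =>
    mul_le_mul_of_nonneg_left (by linarith [hic j hj i hi]) (hnn j hj i hi)

theorem mul_sum_mul_virt {d : ℕ} (θ q : ℕ → ℕ → ℝ) {i : ℕ} (hfi : f i ≠ 0) :
    f i * ∑ k ∈ Icc 1 d, q i k * virt n θ f lam i k
      = f i * dot d (q i) (θ i) - ∑ j ∈ Icc 1 n, lam j i * dot d (q i) (θ j - θ i) := by
  have pointwise : ∀ k, f i * (q i k * virt n θ f lam i k)
      = f i * (q i k * θ i k) - ∑ j ∈ Icc 1 n, lam j i * (q i k * (θ j k - θ i k)) := by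
    intro k
    have factor : ∑ j ∈ Icc 1 n, lam j i * (q i k * (θ j k - θ i k))
        = q i k * ∑ j ∈ Icc 1 n, lam j i * (θ j k - θ i k) := by
      rw [mul_sum]
      exact sum_congr rfl fun j _ => mul_left_comm _ _ _
    rw [virt, factor]
    field_simp
  simp only [mul_sum, pointwise, sum_sub_distrib, dot, Pi.sub_apply]
  rw [sum_comm]

theorem sum_flow_utility_sub_eq_vw {d : ℕ} {θ q : ℕ → ℕ → ℝ}
    (hq0 : ∀ k ∈ Icc 1 d, q 0 k = 0) (hf : ∀ i ∈ Icc 1 n, f i ≠ 0)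
    (hflow : FlowConservation n f lam) :
    ∑ j ∈ Icc 1 n, ∑ i ∈ Icc 0 n, lam j i * (dot d (q j) (θ j) - dot d (q i) (θ j))
      = vw d n f (virt n θ f lam) q := by
  set s : ℕ → ℝ := fun i => dot d (q i) (θ i)
  have split : ∀ j i, dot d (q j) (θ j) - dot d (q i) (θ j)
      = (s j - s i) - dot d (q i) (θ j - θ i) := fun j i => by rw [dot_sub_right]; ring
  have outside_option : ∑ j ∈ Icc 1 n, lam j 0 * dot d (q 0) (θ j - θ 0) = 0 :=
    sum_eq_zero fun j _ => by rw [dot_eq_zero_of_left hq0, mul_zero]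
  calc ∑ j ∈ Icc 1 n, ∑ i ∈ Icc 0 n, lam j i * (dot d (q j) (θ j) - dot d (q i) (θ j))
      = ∑ j ∈ Icc 1 n, ∑ i ∈ Icc 0 n, lam j i * (s j - s i)
          - ∑ j ∈ Icc 1 n, ∑ i ∈ Icc 0 n, lam j i * dot d (q i) (θ j - θ i) := by
        simp only [split, mul_sub, sum_sub_distrib]
    _ = ∑ i ∈ Icc 1 n, f i * s i
          - ∑ i ∈ Icc 1 n, ∑ j ∈ Icc 1 n, lam j i * dot d (q i) (θ j - θ i) := by
        rw [← hflow.sum_mul_eq (dot_eq_zero_of_left hq0 _), sum_comm,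
          sum_Icc_zero_eq_sum_Icc_one outside_option]
    _ = vw d n f (virt n θ f lam) q := by
        rw [vw, ← sum_sub_distrib]
        exact sum_congr rfl fun i hi => (mul_sum_mul_virt θ q (hf i hi)).symm

end Flow

theorem vw_le_sum_max_zero {d n : ℕ} {f : ℕ → ℝ} {q : ℕ → ℕ → ℝ} (hq : InUnitCube d n q)
    (hf : ∀ i ∈ Icc 1 n, 0 ≤ f i) (φ : ℕ → ℕ → ℝ) :
    vw d n f φ q ≤ ∑ i ∈ Icc 1 n, f i * ∑ k ∈ Icc 1 d, max (φ i k) 0 := by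
  refine sum_le_sum fun i hi => mul_le_mul_of_nonneg_left (sum_le_sum fun k hk => ?_) (hf i hi)
  obtain ⟨hq0, hq1⟩ := hq i hi k hk
  calc q i k * φ i k ≤ q i k * max (φ i k) 0 := mul_le_mul_of_nonneg_left (le_max_left _ _) hq0
    _ ≤ max (φ i k) 0 := mul_le_of_le_one_left (le_max_right _ _) hq1

theorem weak_duality_general
    (d n : ℕ)
    (θ : ℕ → ℕ → ℝ)
    (f : ℕ → ℝ) (hf : IsProb n f)
    (q : ℕ → ℕ → ℝ) (t : ℕ → ℝ)
    (hmech : IsMechanism d n q t) (hic : ICIR d n θ q t)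
    (lam : ℕ → ℕ → ℝ) (hnn : NonnegLam n lam) (hflow : FlowConservation n f lam) :
    revenue n f t ≤
      ∑ i ∈ Finset.Icc 1 n, f i * ∑ k ∈ Finset.Icc 1 d, max (virt n θ f lam i k) 0 := by
  obtain ⟨hf_pos, -⟩ := hf
  calc revenue n f t
      ≤ ∑ j ∈ Icc 1 n, ∑ i ∈ Icc 0 n, lam j i * (dot d (q j) (θ j) - dot d (q i) (θ j)) :=
        revenue_le_sum_flow_utility_sub hmech hic hnn hflow
    _ = vw d n f (virt n θ f lam) q :=
        sum_flow_utility_sub_eq_vw hmech.1 (fun i hi => (hf_pos i hi).ne') hflow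
    _ ≤ _ := vw_le_sum_max_zero hmech.2.2 (fun i hi => (hf_pos i hi).le) _

/-- **Weak duality bound**: for every IC-IR mechanism and every nonnegative flow `λ`,
revenue is at most `∑_i f_i ∑_k max(φ_i^{λ,k}, 0)`. -/
theorem weak_duality
    (d n : ℕ) (hd : 1 ≤ d) (hn : 1 ≤ n)
    (θ : ℕ → ℕ → ℝ) (hθ : ∀ i ∈ Finset.Icc 1 n, ∀ k ∈ Finset.Icc 1 d, 0 ≤ θ i k)
    (f : ℕ → ℝ) (hf : IsProb n f)
    (q : ℕ → ℕ → ℝ) (t : ℕ → ℝ)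
    (hmech : IsMechanism d n q t) (hic : ICIR d n θ q t)
    (lam : ℕ → ℕ → ℝ) (hnn : NonnegLam n lam) (hflow : FlowConservation n f lam) :
    revenue n f t ≤
      ∑ i ∈ Finset.Icc 1 n, f i * ∑ k ∈ Finset.Icc 1 d, max (virt n θ f lam i k) 0 :=
  weak_duality_general d n θ f hf q t hmech hic lam hnn hflow
end
end

section
/- Theorem 1 (optimality of upgrade pricing for regular distributions): Suppose the instance is weakly monotone and regular with respect to the same cutoffs i^1, …, i^d ∈ {1,…,n}. Then there exist transfers t_1, …, t_n ∈ ℝ such that the mechanism (q,t) with allocation q_i^k = 1 if i ≥ i^k and q_i^k = 0 otherwise (and (q_0,t_0) = (0,0)) is IC-IR and optimal; moreover this mechanism is an upgrade pricing mechanism. -/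
open Finset

noncomputable section

/-! The cutoff allocation with each good `k` priced at `θ_{i^k}^k` is IC-IR: by weak
monotonicity exactly the types `i ≥ i^k` value good `k` at least its price. Any IC-IR
mechanism leaves type `i` at least the rents `⟨q_m, θ_{m+1} − θ_m⟩`, `m < i`, accumulated
along the chain of local downward constraints; summing them against `f` bounds revenue by the
virtual welfare `∑ f_i ⟨q_i, φ_i⟩`. Regularity makes the cutoff allocation maximize virtual
welfare pointwise, and since `f_i φ_i^k = R_i^k − R_{i+1}^k` telescopes, its virtual welfare
is `∑_k R_{i^k}^k`, which is exactly the revenue of the posted prices. -/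

def cutTransfer (d : ℕ) (θ : ℕ → ℕ → ℝ) (cut : ℕ → ℕ) (i : ℕ) : ℝ :=
  ∑ k ∈ Icc 1 d, cutAlloc cut i k * θ (cut k) k

def rentIncrement (d : ℕ) (θ q : ℕ → ℕ → ℝ) (m : ℕ) : ℝ :=
  dot d (q m) (θ (m + 1)) - dot d (q m) (θ m)

section Distribution

variable {n : ℕ} {f : ℕ → ℝ}

lemma Fc_add_sum_Icc {m : ℕ} (hm : m ≤ n) :
    Fc f m + ∑ i ∈ Icc (m + 1) n, f i = Fc f n := by
  have hIoc : ∀ j, Icc 1 j = Ioc 0 j := Icc_add_one_left_eq_Ioc 0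
  rw [Fc, Fc, hIoc, hIoc, Icc_add_one_left_eq_Ioc]
  exact sum_Ioc_consecutive f (Nat.zero_le m) hm

lemma Fc_succ (i : ℕ) : Fc f (i + 1) = Fc f i + f (i + 1) :=
  sum_Icc_succ_top (Nat.le_add_left 1 i) f

lemma sum_Icc_add_one_eq_one_sub_Fc (hF : Fc f n = 1) {m : ℕ} (hm : m ≤ n) :
    ∑ i ∈ Icc (m + 1) n, f i = 1 - Fc f m := by
  linarith [Fc_add_sum_Icc (f := f) hm]

end Distribution

section VirtualValues

variable {n : ℕ} {θ : ℕ → ℕ → ℝ} {f : ℕ → ℝ} {i : ℕ}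

lemma mul_initVirt (hfi : f i ≠ 0) (hin : i ≤ n) (hF : Fc f n = 1) (k : ℕ) :
    f i * initVirt n θ f i k = f i * θ i k - (1 - Fc f i) * (θ (i + 1) k - θ i k) := by
  unfold initVirt
  split_ifs with h
  · field_simp
  · rw [show i = n by omega, hF]
    ring

lemma mul_initVirt_eq_pseudoRev_sub (hfi : f i ≠ 0) (hi : 1 ≤ i) (hin : i ≤ n)
    (hF : Fc f n = 1) (k : ℕ) :
    f i * initVirt n θ f i k = pseudoRev n θ f i k - pseudoRev n θ f (i + 1) k := by
  obtain ⟨m, rfl⟩ : ∃ m, i = m + 1 := ⟨i - 1, by omega⟩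
  rw [mul_initVirt hfi hin hF, pseudoRev, pseudoRev, if_pos hin, Nat.add_sub_cancel,
    Nat.add_sub_cancel, Fc_succ]
  split_ifs with h
  · ring
  · obtain rfl : m + 1 = n := by omega
    rw [Fc_succ] at hF
    linear_combination θ (m + 1 + 1) k * hF

lemma sum_Icc_mul_initVirt (hf : IsProb n f) {c : ℕ} (hc : 1 ≤ c) (hcn : c ≤ n) (k : ℕ) :
    ∑ i ∈ Icc c n, f i * initVirt n θ f i k = pseudoRev n θ f c k := by
  have hdiff : ∀ i ∈ Icc c n, f i * initVirt n θ f i k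
      = -(pseudoRev n θ f (i + 1) k - pseudoRev n θ f i k) := fun i hi => by
    have hi' := mem_Icc.1 hi
    rw [mul_initVirt_eq_pseudoRev_sub (hf.1 i (mem_Icc.2 ⟨hc.trans hi'.1, hi'.2⟩)).ne'
      (hc.trans hi'.1) hi'.2 hf.2]
    ring
  rw [sum_congr rfl hdiff, sum_neg_distrib, sum_Icc_sub hcn fun i => pseudoRev n θ f i k,
    pseudoRev, if_neg (by omega), zero_sub, neg_neg]

lemma pseudoRev_eq_sum_Icc_mul (hF : Fc f n = 1) {c : ℕ} (hc : 1 ≤ c) (hcn : c ≤ n) (k : ℕ) :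
    pseudoRev n θ f c k = (∑ i ∈ Icc c n, f i) * θ c k := by
  obtain ⟨m, rfl⟩ : ∃ m, c = m + 1 := ⟨c - 1, by omega⟩
  rw [sum_Icc_add_one_eq_one_sub_Fc hF (by omega), pseudoRev, if_pos hcn, Nat.add_sub_cancel]

end VirtualValues

section CutoffMechanism

variable {d n : ℕ} {θ : ℕ → ℕ → ℝ} {cut : ℕ → ℕ}

lemma cutAlloc_mono (cut : ℕ → ℕ) {i j : ℕ} (hij : i ≤ j) (k : ℕ) :
    cutAlloc cut i k ≤ cutAlloc cut j k := by
  unfold cutAlloc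
  by_cases h : cut k ≤ i
  · rw [if_pos h, if_pos (h.trans hij)]
  · rw [if_neg h]
    split_ifs <;> norm_num

lemma upgradePricing_cutAlloc (d n : ℕ) (cut : ℕ → ℕ) : UpgradePricing d n (cutAlloc cut) :=
  fun i _ j _ => (le_total i j).imp (fun h k _ => cutAlloc_mono cut h k)
    (fun h k _ => cutAlloc_mono cut h k)

lemma isMechanism_cutAlloc (hcut : ∀ k ∈ Icc 1 d, 1 ≤ cut k) :
    IsMechanism d n (cutAlloc cut) (cutTransfer d θ cut) := by
  have hq0 : ∀ k ∈ Icc 1 d, cutAlloc cut 0 k = 0 := fun k hk =>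
    if_neg (by have := hcut k hk; omega)
  refine ⟨hq0, sum_eq_zero fun k hk => by rw [hq0 k hk, zero_mul], fun i _ k _ => ?_⟩
  unfold cutAlloc
  split_ifs <;> norm_num

lemma dot_cutAlloc_sub_cutTransfer (i : ℕ) (v : ℕ → ℝ) :
    dot d (cutAlloc cut i) v - cutTransfer d θ cut i
      = ∑ k ∈ Icc 1 d, cutAlloc cut i k * (v k - θ (cut k) k) := by
  simp only [cutTransfer, dot, ← sum_sub_distrib, mul_sub]

lemma icir_cutAlloc (hcut : ∀ k ∈ Icc 1 d, cut k ∈ Icc 1 n) (hwm : WeaklyMonotone d n θ cut) :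
    ICIR d n θ (cutAlloc cut) (cutTransfer d θ cut) := by
  intro j hj i _
  rw [ge_iff_le, dot_cutAlloc_sub_cutTransfer, dot_cutAlloc_sub_cutTransfer]
  refine sum_le_sum fun k hk => ?_
  unfold cutAlloc
  by_cases hjk : cut k ≤ j
  · have hprice := hwm k hk (cut k) (hcut k hk) j hj le_rfl hjk
    split_ifs <;> linarith
  · have hprice := hwm k hk j hj (cut k) (hcut k hk) (by omega) le_rfl
    split_ifs <;> linarith

end CutoffMechanism

section RevenueBound

variable {d n : ℕ} {θ : ℕ → ℕ → ℝ} {f : ℕ → ℝ} {q : ℕ → ℕ → ℝ} {t : ℕ → ℝ}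

lemma sum_rentIncrement_le_utility (hm : IsMechanism d n q t) (hic : ICIR d n θ q t)
    {i : ℕ} (hi : 1 ≤ i) (hin : i ≤ n) :
    ∑ m ∈ Ico 1 i, rentIncrement d θ q m ≤ dot d (q i) (θ i) - t i := by
  induction i, hi using Nat.le_induction with
  | base =>
    have hz : dot d (q 0) (θ 1) = 0 := sum_eq_zero fun k hk => by rw [hm.1 k hk, zero_mul]
    have hIR := hic 1 (mem_Icc.2 ⟨le_rfl, hin⟩) 0 (mem_Icc.2 ⟨le_rfl, Nat.zero_le n⟩)
    rw [hz, hm.2.1] at hIR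
    simpa using hIR
  | succ i hi ih =>
    have hIC := hic (i + 1) (mem_Icc.2 ⟨by omega, hin⟩) i (mem_Icc.2 ⟨Nat.zero_le i, by omega⟩)
    rw [sum_Ico_succ_top hi, rentIncrement]
    linarith [ih (by omega)]

lemma sum_mul_sum_Ico_eq_sum_one_sub_Fc_mul (hF : Fc f n = 1) (D : ℕ → ℝ) :
    ∑ i ∈ Icc 1 n, f i * ∑ m ∈ Ico 1 i, D m = ∑ m ∈ Icc 1 n, (1 - Fc f m) * D m := by
  simp_rw [mul_sum]
  rw [sum_comm' (t' := Icc 1 n) (s' := fun m => Icc (m + 1) n)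
    (fun i m => by simp only [mem_Icc, mem_Ico]; omega)]
  refine sum_congr rfl fun m hm => ?_
  rw [← sum_mul, sum_Icc_add_one_eq_one_sub_Fc hF (mem_Icc.1 hm).2]

lemma vw_initVirt_eq (hf : IsProb n f) (q : ℕ → ℕ → ℝ) :
    vw d n f (initVirt n θ f) q
      = ∑ i ∈ Icc 1 n, (f i * dot d (q i) (θ i) - (1 - Fc f i) * rentIncrement d θ q i) := by
  refine sum_congr rfl fun i hi => ?_
  simp only [rentIncrement, dot, mul_sum, ← sum_sub_distrib]
  refine sum_congr rfl fun k _ => ?_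
  linear_combination q i k * mul_initVirt (θ := θ) (hf.1 i hi).ne' (mem_Icc.1 hi).2 hf.2 k

lemma revenue_le_vw_initVirt (hf : IsProb n f) (hm : IsMechanism d n q t)
    (hic : ICIR d n θ q t) : revenue n f t ≤ vw d n f (initVirt n θ f) q :=
  calc revenue n f t
      ≤ ∑ i ∈ Icc 1 n,
          (f i * dot d (q i) (θ i) - f i * ∑ m ∈ Ico 1 i, rentIncrement d θ q m) := by
        refine sum_le_sum fun i hi => ?_
        have hrent := mul_le_mul_of_nonneg_left
          (sum_rentIncrement_le_utility hm hic (mem_Icc.1 hi).1 (mem_Icc.1 hi).2) (hf.1 i hi).le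
        linarith
    _ = vw d n f (initVirt n θ f) q := by
        rw [vw_initVirt_eq hf, sum_sub_distrib, sum_sub_distrib,
          sum_mul_sum_Ico_eq_sum_one_sub_Fc_mul hf.2]

end RevenueBound

section VirtualWelfare

variable {d n : ℕ} {θ : ℕ → ℕ → ℝ} {f : ℕ → ℝ} {cut : ℕ → ℕ}

lemma vw_le_vw_cutAlloc (hf : ∀ i ∈ Icc 1 n, 0 ≤ f i) {φ : ℕ → ℕ → ℝ}
    (hpos : ∀ k ∈ Icc 1 d, ∀ i ∈ Icc 1 n, cut k ≤ i → 0 ≤ φ i k)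
    (hneg : ∀ k ∈ Icc 1 d, ∀ i ∈ Icc 1 n, i < cut k → φ i k ≤ 0)
    {q : ℕ → ℕ → ℝ} (hq : InUnitCube d n q) : vw d n f φ q ≤ vw d n f φ (cutAlloc cut) := by
  refine sum_le_sum fun i hi => mul_le_mul_of_nonneg_left (sum_le_sum fun k hk => ?_) (hf i hi)
  obtain ⟨hq0, hq1⟩ := hq i hi k hk
  unfold cutAlloc
  split_ifs with h
  · nlinarith [hpos k hk i hi h]
  · nlinarith [hneg k hk i hi (not_le.1 h)]

lemma Regular.initVirt_nonneg (hreg : Regular d n θ f cut)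
    (hcut : ∀ k ∈ Icc 1 d, cut k ∈ Icc 1 n) :
    ∀ k ∈ Icc 1 d, ∀ i ∈ Icc 1 n, cut k ≤ i → 0 ≤ initVirt n θ f i k :=
  fun k hk i hi h => (hreg k hk (cut k) (hcut k hk) i hi le_rfl h).2

lemma Regular.initVirt_nonpos (hreg : Regular d n θ f cut)
    (hcut : ∀ k ∈ Icc 1 d, cut k ∈ Icc 1 n) :
    ∀ k ∈ Icc 1 d, ∀ i ∈ Icc 1 n, i < cut k → initVirt n θ f i k ≤ 0 :=
  fun k hk i hi h => (hreg k hk i hi (cut k) (hcut k hk) h.le le_rfl).1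

lemma sum_mul_cutAlloc_mul {k : ℕ} (hk : 1 ≤ cut k) (g : ℕ → ℝ) :
    ∑ i ∈ Icc 1 n, f i * (cutAlloc cut i k * g i) = ∑ i ∈ Icc (cut k) n, f i * g i := by
  have hIcc : Icc (cut k) n = (Icc 1 n).filter (cut k ≤ ·) := by
    ext i
    simp only [mem_Icc, mem_filter]
    omega
  rw [hIcc, sum_filter]
  refine sum_congr rfl fun i _ => ?_
  unfold cutAlloc
  split_ifs <;> ring

lemma revenue_cutTransfer (hf : IsProb n f) (hcut : ∀ k ∈ Icc 1 d, cut k ∈ Icc 1 n) :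
    revenue n f (cutTransfer d θ cut) = vw d n f (initVirt n θ f) (cutAlloc cut) := by
  unfold revenue vw cutTransfer
  simp_rw [mul_sum]
  rw [sum_comm, sum_comm (s := Icc 1 n)]
  refine sum_congr rfl fun k hk => ?_
  obtain ⟨h1, h2⟩ := mem_Icc.1 (hcut k hk)
  rw [sum_mul_cutAlloc_mul h1, sum_mul_cutAlloc_mul h1, ← sum_mul,
    sum_Icc_mul_initVirt hf h1 h2, pseudoRev_eq_sum_Icc_mul hf.2 h1 h2]

end VirtualWelfare

theorem upgrade_pricing_optimal_regular_general
    (d n : ℕ)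
    (θ : ℕ → ℕ → ℝ)
    (f : ℕ → ℝ) (hf : IsProb n f)
    (cut : ℕ → ℕ) (hcut : ∀ k ∈ Finset.Icc 1 d, cut k ∈ Finset.Icc 1 n)
    (hwm : WeaklyMonotone d n θ cut) (hreg : Regular d n θ f cut) :
    ∃ t : ℕ → ℝ,
      IsMechanism d n (cutAlloc cut) t ∧ ICIR d n θ (cutAlloc cut) t ∧
      Optimal d n θ f (cutAlloc cut) t ∧ UpgradePricing d n (cutAlloc cut) := by
  have hmech : IsMechanism d n (cutAlloc cut) (cutTransfer d θ cut) :=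
    isMechanism_cutAlloc fun k hk => (mem_Icc.1 (hcut k hk)).1
  have hicir := icir_cutAlloc hcut hwm
  refine ⟨cutTransfer d θ cut, hmech, hicir, ⟨hmech, hicir, fun q t hm hic => ?_⟩,
    upgradePricing_cutAlloc d n cut⟩
  calc revenue n f t ≤ vw d n f (initVirt n θ f) q := revenue_le_vw_initVirt hf hm hic
    _ ≤ vw d n f (initVirt n θ f) (cutAlloc cut) :=
        vw_le_vw_cutAlloc (fun i hi => (hf.1 i hi).le) (hreg.initVirt_nonneg hcut)
          (hreg.initVirt_nonpos hcut) hm.2.2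
    _ = revenue n f (cutTransfer d θ cut) := (revenue_cutTransfer hf hcut).symm

/-- **Theorem 1 (optimality of upgrade pricing for regular distributions).**
If the instance is compatibly weakly monotone and regular w.r.t. cutoffs `i^1,…,i^d`,
then there exist transfers making the cutoff allocation `q_i^k = 1[i ≥ i^k]` an optimal
IC-IR mechanism, and this mechanism is an upgrade pricing mechanism. -/
theorem upgrade_pricing_optimal_regular
    (d n : ℕ) (hd : 1 ≤ d) (hn : 1 ≤ n)
    (θ : ℕ → ℕ → ℝ) (hθ : ∀ i ∈ Finset.Icc 1 n, ∀ k ∈ Finset.Icc 1 d, 0 ≤ θ i k)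
    (f : ℕ → ℝ) (hf : IsProb n f)
    (cut : ℕ → ℕ) (hcut : ∀ k ∈ Finset.Icc 1 d, cut k ∈ Finset.Icc 1 n)
    (hwm : WeaklyMonotone d n θ cut) (hreg : Regular d n θ f cut) :
    ∃ t : ℕ → ℝ,
      IsMechanism d n (cutAlloc cut) t ∧ ICIR d n θ (cutAlloc cut) t ∧
      Optimal d n θ f (cutAlloc cut) t ∧ UpgradePricing d n (cutAlloc cut) :=
  upgrade_pricing_optimal_regular_general d n θ f hf cut hcut hwm hreg
end
end

section
/- Lemma 2 (ordered normalized virtual values under monotone MRS): Suppose the type space has monotone MRS. Then for every nonnegative downward flow λ (λ_ji ≥ 0 for all j ∈ {1,…,n}, i ∈ {0,1,…,n}; f_i = Σ_{j=0}^n λ_ij − Σ_{j=1}^n λ_ji for all i; and λ_ji > 0 with j,i ∈ {1,…,n} implies j > i), every i ∈ {1,…,n}, and all items 1 ≤ k ≤ l ≤ d, one has φ_i^{λ,k}/θ_i^k ≥ φ_i^{λ,l}/θ_i^l. -/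
open Finset

noncomputable section

/- Dividing the virtual value by `θ_i^k` gives `1 − (1/f_i) ∑_j λ_ji (θ_j^k/θ_i^k − 1)`; a downward
flow only charges types `j > i`, and for those monotone MRS says exactly that the growth ratio
`θ_j^k/θ_i^k` increases with the good `k`. -/

theorem MonotoneMRS.div_le_div_of_le {d n : ℕ} {θ : ℕ → ℕ → ℝ} (hmrs : MonotoneMRS d n θ)
    {i j k l : ℕ} (hi : i ∈ Icc 1 n) (hj : j ∈ Icc 1 n) (hij : i ≤ j)
    (hk : k ∈ Icc 1 d) (hl : l ∈ Icc 1 d) (hkl : k ≤ l) :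
    θ j k / θ i k ≤ θ j l / θ i l := by
  have hik := hmrs.1 i hi k hk
  have hil := hmrs.1 i hi l hl
  have hjk := hmrs.1 j hj k hk
  have hcross := hmrs.2 i hi j hj hij k hk l hl hkl
  rw [div_le_div_iff₀ hik hjk] at hcross
  rw [div_le_div_iff₀ hik hil]
  linarith

theorem virt_div_eq {n : ℕ} {θ : ℕ → ℕ → ℝ} {i k : ℕ} (f : ℕ → ℝ) (lam : ℕ → ℕ → ℝ)
    (hθ : θ i k ≠ 0) :
    virt n θ f lam i k / θ i k = 1 - 1 / f i * ∑ j ∈ Icc 1 n, lam j i * (θ j k / θ i k - 1) := by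
  simp only [virt, div_sub_one hθ, mul_div_assoc', ← sum_div]
  field_simp

theorem flow_term_le_of_monotoneMRS {d n : ℕ} {θ : ℕ → ℕ → ℝ} {lam : ℕ → ℕ → ℝ}
    (hmrs : MonotoneMRS d n θ) (hnn : NonnegLam n lam) (hdown : Downward n lam)
    {i j k l : ℕ} (hi : i ∈ Icc 1 n) (hj : j ∈ Icc 1 n)
    (hk : k ∈ Icc 1 d) (hl : l ∈ Icc 1 d) (hkl : k ≤ l) :
    lam j i * (θ j k / θ i k - 1) ≤ lam j i * (θ j l / θ i l - 1) := by
  have hi₀ : i ∈ Icc 0 n := Icc_subset_Icc_left (Nat.zero_le 1) hi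
  rcases (hnn j hj i hi₀).eq_or_lt with hzero | hpos
  · simp [← hzero]
  · have hij : i ≤ j := (hdown j hj i hi hpos).le
    exact mul_le_mul_of_nonneg_left
      (sub_le_sub_right (hmrs.div_le_div_of_le hi hj hij hk hl hkl) 1) hpos.le

theorem ordered_normalized_virtual_values_general
    (d n : ℕ)
    (θ : ℕ → ℕ → ℝ) (f : ℕ → ℝ) (hf : IsProb n f)
    (hmrs : MonotoneMRS d n θ)
    (lam : ℕ → ℕ → ℝ) (hnn : NonnegLam n lam)
    (hdown : Downward n lam) :
    ∀ i ∈ Finset.Icc 1 n, ∀ k ∈ Finset.Icc 1 d, ∀ l ∈ Finset.Icc 1 d, k ≤ l →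
      virt n θ f lam i l / θ i l ≤ virt n θ f lam i k / θ i k := by
  intro i hi k hk l hl hkl
  rw [virt_div_eq f lam (hmrs.1 i hi l hl).ne', virt_div_eq f lam (hmrs.1 i hi k hk).ne']
  have hfi : 0 < 1 / f i := one_div_pos.mpr (hf.1 i hi)
  gcongr 1 - 1 / f i * ?_
  exact sum_le_sum fun j hj => flow_term_le_of_monotoneMRS hmrs hnn hdown hi hj hk hl hkl

/-- **Lemma 2 (ordered normalized virtual values under monotone MRS)**: for every
nonnegative downward flow `λ`, type `i`, and items `k ≤ l`,
`φ_i^{λ,k}/θ_i^k ≥ φ_i^{λ,l}/θ_i^l`. -/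
theorem ordered_normalized_virtual_values
    (d n : ℕ) (hd : 1 ≤ d) (hn : 1 ≤ n)
    (θ : ℕ → ℕ → ℝ) (f : ℕ → ℝ) (hf : IsProb n f)
    (hmrs : MonotoneMRS d n θ)
    (lam : ℕ → ℕ → ℝ) (hnn : NonnegLam n lam) (hflow : FlowConservation n f lam)
    (hdown : Downward n lam) :
    ∀ i ∈ Finset.Icc 1 n, ∀ k ∈ Finset.Icc 1 d, ∀ l ∈ Finset.Icc 1 d, k ≤ l →
      virt n θ f lam i l / θ i l ≤ virt n θ f lam i k / θ i k :=
  ordered_normalized_virtual_values_general d n θ f hf hmrs lam hnn hdown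
end
end

section
/- Lemma 3 (virtual welfare maximization from neighboring items): Suppose the type space has monotone MRS and let i^1 ≤ i^2 ≤ … ≤ i^d be cutoffs in {1,…,n}; set i^0 := 1 and i^{d+1} := n. Let λ be a nonnegative downward flow (λ_ji ≥ 0; f_i = Σ_{j=0}^n λ_ij − Σ_{j=1}^n λ_ji for all i ∈ {1,…,n}; λ_ji > 0 with j,i ∈ {1,…,n} implies j > i) such that for every k ∈ {0,1,…,d} and every i with i^k ≤ i ≤ i^{k+1}: φ_i^{λ,k} ≥ 0 if k ≥ 1, and φ_i^{λ,k+1} ≤ 0 if k ≤ d−1. Then the allocation q_i^k = 1 if i ≥ i^k and 0 otherwise maximizes the virtual welfare Σ_{i=1}^n f_i ⟨q'_i, φ_i^λ⟩ over all allocations q'_1, …, q'_n ∈ [0,1]^d. -/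
/-! For k ≤ l the difference θ_i^l φ_i^k − θ_i^k φ_i^l equals
(1/f_i) Σ_j λ_ji (θ_i^k θ_j^l − θ_i^l θ_j^k), and a downward flow only charges types j > i, for
which monotone MRS makes every summand nonnegative. So along the goods the sign of φ_i^k can only
switch from nonnegative to nonpositive. If i^k ≤ i, some m ≥ k has i^m ≤ i ≤ i^{m+1}, and the
sign hypothesis gives φ_i^m ≥ 0, hence φ_i^k ≥ 0; if i < i^k, some m < k has the same property
and φ_i^{m+1} ≤ 0 gives φ_i^k ≤ 0. The cutoff allocation then maximizes every summand
q_i^k φ_i^k separately. -/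

open Finset

noncomputable section

lemma mul_virt_sub_mul_virt {n : ℕ} (θ : ℕ → ℕ → ℝ) (f : ℕ → ℝ) (lam : ℕ → ℕ → ℝ) (i k l : ℕ) :
    θ i l * virt n θ f lam i k - θ i k * virt n θ f lam i l =
      1 / f i * ∑ j ∈ Icc 1 n, lam j i * (θ i k * θ j l - θ i l * θ j k) := by
  have hsum : ∑ j ∈ Icc 1 n, lam j i * (θ i k * θ j l - θ i l * θ j k) =
      θ i k * ∑ j ∈ Icc 1 n, lam j i * (θ j l - θ i l) -
        θ i l * ∑ j ∈ Icc 1 n, lam j i * (θ j k - θ i k) := by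
    rw [Finset.mul_sum, Finset.mul_sum, ← Finset.sum_sub_distrib]
    exact Finset.sum_congr rfl fun j _ => by ring
  rw [hsum, virt, virt]
  ring

section VirtualValues

variable {d n : ℕ} {θ : ℕ → ℕ → ℝ} {f : ℕ → ℝ} {lam : ℕ → ℕ → ℝ}

lemma MonotoneMRS.mul_le_mul (hmrs : MonotoneMRS d n θ) {i j k l : ℕ}
    (hi : i ∈ Icc 1 n) (hj : j ∈ Icc 1 n) (hij : i ≤ j)
    (hk : k ∈ Icc 1 d) (hl : l ∈ Icc 1 d) (hkl : k ≤ l) :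
    θ i l * θ j k ≤ θ i k * θ j l := by
  have h := hmrs.2 i hi j hj hij k hk l hl hkl
  rw [div_le_div_iff₀ (hmrs.1 i hi k hk) (hmrs.1 j hj k hk)] at h
  linarith

lemma mul_virt_le_mul_virt_of_cross_le {i k l : ℕ} (hf : 0 ≤ f i)
    (hlam : ∀ j ∈ Icc 1 n, 0 ≤ lam j i)
    (hcross : ∀ j ∈ Icc 1 n, 0 < lam j i → θ i l * θ j k ≤ θ i k * θ j l) :
    θ i k * virt n θ f lam i l ≤ θ i l * virt n θ f lam i k := by
  have hnonneg : 0 ≤ 1 / f i * ∑ j ∈ Icc 1 n, lam j i * (θ i k * θ j l - θ i l * θ j k) := by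
    refine mul_nonneg (one_div_nonneg.mpr hf) (Finset.sum_nonneg fun j hj => ?_)
    rcases (hlam j hj).eq_or_lt with hzero | hpos
    · rw [← hzero, zero_mul]
    · exact mul_nonneg hpos.le (sub_nonneg.mpr (hcross j hj hpos))
  linarith [mul_virt_sub_mul_virt (n := n) θ f lam i k l]

lemma MonotoneMRS.mul_virt_le_mul_virt (hmrs : MonotoneMRS d n θ) (hnn : NonnegLam n lam)
    (hdown : Downward n lam) {i k l : ℕ} (hf : 0 ≤ f i) (hi : i ∈ Icc 1 n)
    (hk : k ∈ Icc 1 d) (hl : l ∈ Icc 1 d) (hkl : k ≤ l) :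
    θ i k * virt n θ f lam i l ≤ θ i l * virt n θ f lam i k :=
  mul_virt_le_mul_virt_of_cross_le hf
    (fun j hj => hnn j hj i (Icc_subset_Icc_left zero_le_one hi))
    fun j hj hpos => hmrs.mul_le_mul hi hj (hdown j hj i hi hpos).le hk hl hkl

lemma MonotoneMRS.virt_nonneg_of_le (hmrs : MonotoneMRS d n θ) (hnn : NonnegLam n lam)
    (hdown : Downward n lam) {i k l : ℕ} (hf : 0 ≤ f i) (hi : i ∈ Icc 1 n)
    (hk : k ∈ Icc 1 d) (hl : l ∈ Icc 1 d) (hkl : k ≤ l) (h : 0 ≤ virt n θ f lam i l) :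
    0 ≤ virt n θ f lam i k :=
  nonneg_of_mul_nonneg_right
    ((mul_nonneg (hmrs.1 i hi k hk).le h).trans
      (hmrs.mul_virt_le_mul_virt hnn hdown hf hi hk hl hkl))
    (hmrs.1 i hi l hl)

lemma MonotoneMRS.virt_nonpos_of_le (hmrs : MonotoneMRS d n θ) (hnn : NonnegLam n lam)
    (hdown : Downward n lam) {i k l : ℕ} (hf : 0 ≤ f i) (hi : i ∈ Icc 1 n)
    (hk : k ∈ Icc 1 d) (hl : l ∈ Icc 1 d) (hkl : k ≤ l) (h : virt n θ f lam i k ≤ 0) :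
    virt n θ f lam i l ≤ 0 :=
  nonpos_of_mul_nonpos_right
    ((hmrs.mul_virt_le_mul_virt hnn hdown hf hi hk hl hkl).trans
      (mul_nonpos_of_nonneg_of_nonpos (hmrs.1 i hi l hl).le h))
    (hmrs.1 i hi k hk)

end VirtualValues

lemma exists_map_le_le_map_succ (c : ℕ → ℕ) {a b x : ℕ} (hab : a < b) (ha : c a ≤ x)
    (hb : x ≤ c b) : ∃ m, a ≤ m ∧ m < b ∧ c m ≤ x ∧ x ≤ c (m + 1) := by
  induction b with
  | zero => omega
  | succ b ih =>
    rcases (Nat.lt_succ_iff.mp hab).eq_or_lt with rfl | hab'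
    · exact ⟨a, le_rfl, hab, ha, hb⟩
    · by_cases hxb : x ≤ c b
      · obtain ⟨m, ham, hmb, hm⟩ := ih hab' hxb
        exact ⟨m, ham, by omega, hm⟩
      · exact ⟨b, hab'.le, b.lt_succ_self, by omega, hb⟩

def SignedBetweenCutoffs (d n : ℕ) (cut : ℕ → ℕ) (φ : ℕ → ℕ → ℝ) : Prop :=
  ∀ k, k ≤ d → ∀ i, extCut n d cut k ≤ i → i ≤ extCut n d cut (k + 1) →
    (1 ≤ k → 0 ≤ φ i k) ∧ (k + 1 ≤ d → φ i (k + 1) ≤ 0)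

section Cutoffs

variable {d n : ℕ} {θ : ℕ → ℕ → ℝ} {f : ℕ → ℝ} {lam : ℕ → ℕ → ℝ} {cut : ℕ → ℕ}

lemma virt_nonneg_of_cut_le (hmrs : MonotoneMRS d n θ) (hnn : NonnegLam n lam)
    (hdown : Downward n lam) (hsign : SignedBetweenCutoffs d n cut (virt n θ f lam))
    {i k : ℕ} (hf : 0 ≤ f i) (hi : i ∈ Icc 1 n) (hk : k ∈ Icc 1 d) (hik : cut k ≤ i) :
    0 ≤ virt n θ f lam i k := by
  obtain ⟨hk1, hkd⟩ := mem_Icc.mp hk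
  have hin := (mem_Icc.mp hi).2
  obtain ⟨m, hkm, hmd, hm, hm'⟩ := exists_map_le_le_map_succ (extCut n d cut) (a := k)
    (b := d + 1) (x := i) (by omega) (by simpa [extCut, hkd, show k ≠ 0 by omega] using hik)
    (by simpa [extCut] using hin)
  have hmIcc : m ∈ Icc 1 d := mem_Icc.mpr ⟨by omega, by omega⟩
  exact hmrs.virt_nonneg_of_le hnn hdown hf hi hk hmIcc hkm
    ((hsign m (by omega) i hm hm').1 (by omega))

lemma virt_nonpos_of_lt_cut (hmrs : MonotoneMRS d n θ) (hnn : NonnegLam n lam)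
    (hdown : Downward n lam) (hsign : SignedBetweenCutoffs d n cut (virt n θ f lam))
    {i k : ℕ} (hf : 0 ≤ f i) (hi : i ∈ Icc 1 n) (hk : k ∈ Icc 1 d) (hik : i < cut k) :
    virt n θ f lam i k ≤ 0 := by
  obtain ⟨hk1, hkd⟩ := mem_Icc.mp hk
  have hi1 := (mem_Icc.mp hi).1
  obtain ⟨m, -, hmk, hm, hm'⟩ := exists_map_le_le_map_succ (extCut n d cut) (a := 0)
    (b := k) (x := i) (by omega) (by simpa [extCut] using hi1)
    (by simpa [extCut, hkd, show k ≠ 0 by omega] using hik.le)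
  have hmIcc : m + 1 ∈ Icc 1 d := mem_Icc.mpr ⟨by omega, by omega⟩
  exact hmrs.virt_nonpos_of_le hnn hdown hf hi hmIcc hk hmk
    ((hsign m (by omega) i hm hm').2 (by omega))

end Cutoffs

lemma vw_le_vw {d n : ℕ} {f : ℕ → ℝ} {φ q q' : ℕ → ℕ → ℝ} (hf : ∀ i ∈ Icc 1 n, 0 ≤ f i)
    (h : ∀ i ∈ Icc 1 n, ∀ k ∈ Icc 1 d, q i k * φ i k ≤ q' i k * φ i k) :
    vw d n f φ q ≤ vw d n f φ q' :=
  Finset.sum_le_sum fun i hi => mul_le_mul_of_nonneg_left (Finset.sum_le_sum (h i hi)) (hf i hi)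

lemma mul_le_cutAlloc_mul {x φ : ℝ} (hx0 : 0 ≤ x) (hx1 : x ≤ 1) {cut : ℕ → ℕ} {i k : ℕ}
    (hnonneg : cut k ≤ i → 0 ≤ φ) (hnonpos : i < cut k → φ ≤ 0) :
    x * φ ≤ cutAlloc cut i k * φ := by
  unfold cutAlloc
  split_ifs with hc
  · simpa using mul_le_of_le_one_left (hnonneg hc) hx1
  · simpa using mul_nonpos_of_nonneg_of_nonpos hx0 (hnonpos (not_le.mp hc))

theorem vw_max_neighboring_general
    (d n : ℕ)
    (θ : ℕ → ℕ → ℝ) (f : ℕ → ℝ) (hf : IsProb n f)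
    (hmrs : MonotoneMRS d n θ)
    (cut : ℕ → ℕ)
    (lam : ℕ → ℕ → ℝ) (hnn : NonnegLam n lam)
    (hdown : Downward n lam)
    (hsign : ∀ k, k ≤ d → ∀ i, extCut n d cut k ≤ i → i ≤ extCut n d cut (k + 1) →
      (1 ≤ k → 0 ≤ virt n θ f lam i k) ∧ (k + 1 ≤ d → virt n θ f lam i (k + 1) ≤ 0)) :
    ∀ q' : ℕ → ℕ → ℝ, InUnitCube d n q' →
      vw d n f (virt n θ f lam) q' ≤ vw d n f (virt n θ f lam) (cutAlloc cut) := by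
  intro q' hq'
  refine vw_le_vw (fun i hi => (hf.1 i hi).le) fun i hi k hk => ?_
  have hfi := (hf.1 i hi).le
  exact mul_le_cutAlloc_mul (hq' i hi k hk).1 (hq' i hi k hk).2
    (virt_nonneg_of_cut_le hmrs hnn hdown hsign hfi hi hk)
    (virt_nonpos_of_lt_cut hmrs hnn hdown hsign hfi hi hk)

/-- **Lemma 3 (virtual welfare maximization from neighboring items)**: under monotone MRS,
if a nonnegative downward flow has `φ_i^{λ,k} ≥ 0` and `φ_i^{λ,k+1} ≤ 0` for all
`i^k ≤ i ≤ i^{k+1}` (with `i^0 = 1`, `i^{d+1} = n`), then the cutoff allocation maximizes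
virtual welfare. -/
theorem vw_max_neighboring
    (d n : ℕ) (hd : 1 ≤ d) (hn : 1 ≤ n)
    (θ : ℕ → ℕ → ℝ) (f : ℕ → ℝ) (hf : IsProb n f)
    (hmrs : MonotoneMRS d n θ)
    (cut : ℕ → ℕ) (hcut : ∀ k ∈ Finset.Icc 1 d, cut k ∈ Finset.Icc 1 n)
    (hcutmono : ∀ k, 1 ≤ k → k + 1 ≤ d → cut k ≤ cut (k + 1))
    (lam : ℕ → ℕ → ℝ) (hnn : NonnegLam n lam) (hflow : FlowConservation n f lam)
    (hdown : Downward n lam)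
    (hsign : ∀ k, k ≤ d → ∀ i, extCut n d cut k ≤ i → i ≤ extCut n d cut (k + 1) →
      (1 ≤ k → 0 ≤ virt n θ f lam i k) ∧ (k + 1 ≤ d → virt n θ f lam i (k + 1) ≤ 0)) :
    ∀ q' : ℕ → ℕ → ℝ, InUnitCube d n q' →
      vw d n f (virt n θ f lam) q' ≤ vw d n f (virt n θ f lam) (cutAlloc cut) :=
  vw_max_neighboring_general d n θ f hf hmrs cut lam hnn hdown hsign
end
end

section
/- Iteration invariant of the Ironing Algorithm (Lemma 4, per-step form): Let i ∈ {1,…,n}, let γ ∈ [0,1], and let λ be a nonnegative matrix satisfying flow conservation (f_r = Σ_{j=0}^n λ_rj − Σ_{j=1}^n λ_jr for all r ∈ {1,…,n}) such that λ_ij = 0 for every j ∈ {0,1,…,n} with j ≠ i−1. Then the ironing update λ'(γ) is nonnegative and satisfies flow conservation; moreover, if λ is downward then so is λ'(γ). -/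
open Finset

noncomputable section

/-! The ironing update is `λ + (1 − γ) • ironShift n λ i`, where the shift reroutes the flow
entering `i` from each `j > i` directly to `i − 1` and removes the same total from the edge
`i → i − 1`. Rerouting along a path does not change the net outflow of any type, so flow
conservation survives. The only entry that can turn negative is `λ'_{i(i−1)}`; but by
conservation at `i` that edge carries all of the outflow of `i`, hence at least the inflow into
`i` from above. -/

theorem sum_Icc_ite_lt {M : Type*} [AddCommMonoid M] (n i : ℕ) (g : ℕ → M) :
    ∑ j ∈ Icc 1 n, (if i < j then g j else 0) = ∑ j ∈ Icc (i + 1) n, g j := by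
  rw [← sum_filter]
  congr 1
  ext j
  simp only [mem_filter, mem_Icc]
  omega

def netOutflow (n : ℕ) (lam : ℕ → ℕ → ℝ) (r : ℕ) : ℝ :=
  ∑ c ∈ Icc 0 n, lam r c - ∑ j ∈ Icc 1 n, lam j r

theorem netOutflow_add_smul (n : ℕ) (lam μ : ℕ → ℕ → ℝ) (a : ℝ) (r : ℕ) :
    netOutflow n (lam + a • μ) r = netOutflow n lam r + a * netOutflow n μ r := by
  simp only [netOutflow, Pi.add_apply, Pi.smul_apply, smul_eq_mul, sum_add_distrib, ← mul_sum]
  ring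

def ironShift (n : ℕ) (lam : ℕ → ℕ → ℝ) (i : ℕ) : ℕ → ℕ → ℝ :=
  fun j r =>
    if i < j ∧ r = i then -lam j i
    else if i < j ∧ r = i - 1 then lam j i
    else if j = i ∧ r = i - 1 then -∑ j' ∈ Icc (i + 1) n, lam j' i
    else 0

theorem ironUpdate_eq_add_smul_ironShift (n : ℕ) (lam : ℕ → ℕ → ℝ) (i : ℕ) (γ : ℝ) :
    ironUpdate n lam i γ = lam + (1 - γ) • ironShift n lam i := by
  funext j r
  simp only [ironUpdate, ironShift, Pi.add_apply, Pi.smul_apply, smul_eq_mul]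
  split_ifs with h₁ h₂ h₃
  · rw [h₁.2]; ring
  · rw [h₂.2]
  · rw [h₃.1, h₃.2]; ring
  · ring

section ironShift

variable {n : ℕ} {lam : ℕ → ℕ → ℝ} {i : ℕ}

theorem sum_row_ironShift (hi : i ∈ Icc 1 n) {r : ℕ} (hr : r ∈ Icc 1 n) :
    ∑ c ∈ Icc 0 n, ironShift n lam i r c =
      if r = i then -∑ j ∈ Icc (i + 1) n, lam j i else 0 := by
  simp only [mem_Icc] at hi hr
  have hi₀ : i ∈ Icc 0 n := mem_Icc.2 ⟨i.zero_le, hi.2⟩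
  have hi₁ : i - 1 ∈ Icc 0 n := mem_Icc.2 ⟨(i - 1).zero_le, by omega⟩
  rcases lt_trichotomy i r with hir | rfl | hri
  · have hrow : ∀ c, ironShift n lam i r c =
        (if c = i then -lam r i else 0) + (if c = i - 1 then lam r i else 0) := by
      intro c
      simp only [ironShift]
      split_ifs <;> first | omega | ring
    simp only [hrow, sum_add_distrib, sum_ite_eq', hi₀, hi₁, if_true, hir.ne', if_false]
    ring
  · have hrow : ∀ c, ironShift n lam i i c =
        if c = i - 1 then -∑ j ∈ Icc (i + 1) n, lam j i else 0 := by
      intro c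
      simp only [ironShift, lt_irrefl, false_and, if_false, true_and]
    simp only [hrow, sum_ite_eq', hi₁, if_true]
  · have hrow : ∀ c, ironShift n lam i r c = 0 := by
      intro c
      simp only [ironShift]
      split_ifs <;> first | omega | rfl
    simp only [hrow, sum_const_zero, hri.ne, if_false]

theorem sum_col_ironShift (hi : i ∈ Icc 1 n) (r : ℕ) :
    ∑ j ∈ Icc 1 n, ironShift n lam i j r =
      if r = i then -∑ j ∈ Icc (i + 1) n, lam j i else 0 := by
  have hi' := mem_Icc.1 hi
  by_cases hri : r = i
  · subst hri
    have hcol : ∀ j, ironShift n lam r j r = if r < j then -lam j r else 0 := by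
      intro j
      simp only [ironShift, and_true]
      split_ifs <;> first | omega | rfl
    simp only [hcol, sum_Icc_ite_lt, sum_neg_distrib, if_true]
  by_cases hri₁ : r = i - 1
  · subst hri₁
    have hcol : ∀ j, ironShift n lam i j (i - 1) =
        (if i < j then lam j i else 0) + (if j = i then -∑ j ∈ Icc (i + 1) n, lam j i else 0) := by
      intro j
      simp only [ironShift, and_true]
      split_ifs <;> first | omega | ring
    simp only [hcol, sum_add_distrib, sum_Icc_ite_lt, sum_ite_eq', hi, if_true, hri, if_false]
    ring
  · have hcol : ∀ j, ironShift n lam i j r = 0 := by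
      intro j
      simp only [ironShift]
      split_ifs <;> first | omega | rfl
    simp only [hcol, sum_const_zero, hri, if_false]

theorem netOutflow_ironShift (hi : i ∈ Icc 1 n) {r : ℕ} (hr : r ∈ Icc 1 n) :
    netOutflow n (ironShift n lam i) r = 0 := by
  rw [netOutflow, sum_row_ironShift hi hr, sum_col_ironShift hi, sub_self]

end ironShift

section ironUpdate

variable {n : ℕ} {f : ℕ → ℝ} {lam : ℕ → ℕ → ℝ} {i : ℕ} {γ : ℝ}

theorem flowConservation_ironUpdate (hi : i ∈ Icc 1 n) (hflow : FlowConservation n f lam) :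
    FlowConservation n f (ironUpdate n lam i γ) := by
  intro r hr
  change f r = netOutflow n _ r
  rw [ironUpdate_eq_add_smul_ironShift, netOutflow_add_smul, netOutflow_ironShift hi hr,
    mul_zero, add_zero]
  exact hflow r hr

theorem sum_inflow_above_le (hnn : NonnegLam n lam) (hi : i ∈ Icc 1 n)
    (hflow : f i = netOutflow n lam i) (hfi : 0 ≤ f i)
    (hout : ∀ j ∈ Icc 0 n, j ≠ i - 1 → lam i j = 0) :
    ∑ j ∈ Icc (i + 1) n, lam j i ≤ lam i (i - 1) := by
  have hi' := mem_Icc.1 hi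
  have hrow : ∑ c ∈ Icc 0 n, lam i c = lam i (i - 1) :=
    sum_eq_single_of_mem (i - 1) (mem_Icc.2 ⟨(i - 1).zero_le, by omega⟩) hout
  have habove : ∑ j ∈ Icc (i + 1) n, lam j i ≤ ∑ j ∈ Icc 1 n, lam j i :=
    sum_le_sum_of_subset_of_nonneg (Icc_subset_Icc (by omega) le_rfl)
      fun j hj _ => hnn j hj i (mem_Icc.2 ⟨i.zero_le, hi'.2⟩)
  rw [netOutflow, hrow] at hflow
  linarith

theorem nonnegLam_ironUpdate (hnn : NonnegLam n lam) (hγ : γ ∈ Set.Icc (0 : ℝ) 1)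
    (hS : ∑ j ∈ Icc (i + 1) n, lam j i ≤ lam i (i - 1)) :
    NonnegLam n (ironUpdate n lam i γ) := by
  obtain ⟨hγ₀, hγ₁⟩ := hγ
  intro j hj r hr
  have hj' := mem_Icc.1 hj
  simp only [ironUpdate]
  split_ifs with h₁ h₂ h₃
  · exact mul_nonneg hγ₀ (hnn j hj i (mem_Icc.2 ⟨i.zero_le, by omega⟩))
  · rw [h₂.2] at hr
    exact add_nonneg (hnn j hj (i - 1) hr)
      (mul_nonneg (sub_nonneg.2 hγ₁) (hnn j hj i (mem_Icc.2 ⟨i.zero_le, by omega⟩)))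
  · obtain ⟨rfl, -⟩ := h₃
    have hS₀ : 0 ≤ ∑ j' ∈ Icc (j + 1) n, lam j' j :=
      sum_nonneg fun k hk => hnn k (Icc_subset_Icc (by omega) le_rfl hk) j
        (mem_Icc.2 ⟨j.zero_le, hj'.2⟩)
    nlinarith
  · exact hnn j hj r hr

theorem downward_ironUpdate (hdown : Downward n lam) : Downward n (ironUpdate n lam i γ) := by
  intro j hj r hr hpos
  simp only [mem_Icc] at hj hr
  unfold ironUpdate at hpos
  split_ifs at hpos with h₁ h₂ h₃
  · omega
  · omega
  · omega
  · exact hdown j (mem_Icc.2 hj) r (mem_Icc.2 hr) hpos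

end ironUpdate

theorem iron_update_flow_general
    (n : ℕ)
    (f : ℕ → ℝ) (hf : IsProb n f)
    (lam : ℕ → ℕ → ℝ) (i : ℕ) (hi : i ∈ Finset.Icc 1 n)
    (γ : ℝ) (hγ : γ ∈ Set.Icc (0 : ℝ) 1)
    (hnn : NonnegLam n lam) (hflow : FlowConservation n f lam)
    (hout : ∀ j ∈ Finset.Icc 0 n, j ≠ i - 1 → lam i j = 0) :
    NonnegLam n (ironUpdate n lam i γ) ∧
    FlowConservation n f (ironUpdate n lam i γ) ∧
    (Downward n lam → Downward n (ironUpdate n lam i γ)) :=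
  ⟨nonnegLam_ironUpdate hnn hγ (sum_inflow_above_le hnn hi (hflow i hi) (hf.1 i hi).le hout),
    flowConservation_ironUpdate hi hflow, downward_ironUpdate⟩

/-- **Iteration invariant of the Ironing Algorithm (Lemma 4, per-step form)**: the ironing
update of a nonnegative flow whose only outgoing edge from type `i` goes to `i−1` is again
a nonnegative flow, and downwardness is preserved. -/
theorem iron_update_flow
    (d n : ℕ) (hd : 1 ≤ d) (hn : 1 ≤ n)
    (θ : ℕ → ℕ → ℝ) (f : ℕ → ℝ) (hf : IsProb n f)
    (lam : ℕ → ℕ → ℝ) (i : ℕ) (hi : i ∈ Finset.Icc 1 n)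
    (γ : ℝ) (hγ : γ ∈ Set.Icc (0 : ℝ) 1)
    (hnn : NonnegLam n lam) (hflow : FlowConservation n f lam)
    (hout : ∀ j ∈ Finset.Icc 0 n, j ≠ i - 1 → lam i j = 0) :
    NonnegLam n (ironUpdate n lam i γ) ∧
    FlowConservation n f (ironUpdate n lam i γ) ∧
    (Downward n lam → Downward n (ironUpdate n lam i γ)) :=
  iron_update_flow_general n f hf lam i hi γ hγ hnn hflow hout
end
end

section
/- Lemma 5 (the ironing update changes pseudo-revenue only at the ironed type): Let λ = (λ_ji) be any matrix (j ∈ {1,…,n}, i ∈ {0,1,…,n}), let i ∈ {1,…,n}, γ ∈ ℝ, and let λ' := λ'(γ) be the ironing update. Then for every item k ∈ {1,…,d}: R_j^{λ',k} = R_j^{λ,k} for every j ∈ {1,…,n} with j ≠ i, and φ_j^{λ',k} = φ_j^{λ,k} for every j ∈ {1,…,n} with j ∉ {i−1, i}. -/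
open Finset

noncomputable section

/- Multiplying out, `f_m φ_m^{λ,k} = f_m θ_m^k − ∑_j λ_{jm} (θ_j^k − θ_m^k)`. The update only
touches columns `i − 1` and `i` of `λ`: it shifts the mass `(1 − γ) λ_{ji}` of each `j > i` from
column `i` to column `i − 1` and removes the same total from `λ_{i(i−1)}`, so the sum of the
correction terms of types `i − 1` and `i` is unchanged. Hence `R_j = ∑_{m ≥ j} f_m φ_m` changes
only when the range `m ≥ j` contains `i` but not `i − 1`, that is, when `j = i`. -/

theorem Finset.sum_eq_sum_of_eq_off_pair {α M : Type*} [AddCommMonoid M] {s : Finset α}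
    {a b : α} {g g' : α → M} (ha : a ∈ s) (hb : b ∈ s) (hab : a ≠ b)
    (hoff : ∀ x ∈ s, x ≠ a → x ≠ b → g' x = g x) (hpair : g' a + g' b = g a + g b) :
    ∑ x ∈ s, g' x = ∑ x ∈ s, g x := by
  classical
  have hb' : b ∈ s.erase a := mem_erase.2 ⟨hab.symm, hb⟩
  rw [← add_sum_erase s g' ha, ← add_sum_erase s g ha, ← add_sum_erase _ g' hb',
    ← add_sum_erase _ g hb', ← add_assoc, ← add_assoc, hpair]
  congr 1
  refine sum_congr rfl fun x hx => ?_
  obtain ⟨hxb, hx⟩ := mem_erase.1 hx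
  obtain ⟨hxa, hx⟩ := mem_erase.1 hx
  exact hoff x hx hxa hxb

def flowTerm (n : ℕ) (θ : ℕ → ℕ → ℝ) (lam : ℕ → ℕ → ℝ) (m k : ℕ) : ℝ :=
  ∑ j ∈ Icc 1 n, lam j m * (θ j k - θ m k)

section IronUpdate

variable {n : ℕ} {θ : ℕ → ℕ → ℝ} {f : ℕ → ℝ} {lam : ℕ → ℕ → ℝ} {i j m : ℕ} {γ : ℝ}

theorem mul_virt_eq_sub_flowTerm (hm : f m ≠ 0) (k : ℕ) :
    f m * virt n θ f lam m k = f m * θ m k - flowTerm n θ lam m k := by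
  rw [virt, flowTerm, mul_sub, ← mul_assoc, mul_one_div_cancel hm, one_mul]

theorem ironUpdate_of_ne (j : ℕ) (h₁ : m ≠ i - 1) (h₂ : m ≠ i) :
    ironUpdate n lam i γ j m = lam j m := by
  simp [ironUpdate, h₁, h₂]

theorem virt_ironUpdate_of_ne (h₁ : m ≠ i - 1) (h₂ : m ≠ i) (k : ℕ) :
    virt n θ f (ironUpdate n lam i γ) m k = virt n θ f lam m k := by
  simp only [virt, ironUpdate_of_ne _ h₁ h₂]

theorem flowTerm_ironUpdate_pred_add_self (hi : i ∈ Icc 1 n) (k : ℕ) :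
    flowTerm n θ (ironUpdate n lam i γ) (i - 1) k + flowTerm n θ (ironUpdate n lam i γ) i k =
      flowTerm n θ lam (i - 1) k + flowTerm n θ lam i k := by
  set S := ∑ j ∈ Icc (i + 1) n, lam j i
  have hpred : i - 1 ≠ i := by have := (mem_Icc.1 hi).1; omega
  have hterm : ∀ j, ironUpdate n lam i γ j (i - 1) * (θ j k - θ (i - 1) k) +
        ironUpdate n lam i γ j i * (θ j k - θ i k) =
      lam j (i - 1) * (θ j k - θ (i - 1) k) + lam j i * (θ j k - θ i k) +
        (1 - γ) * (θ i k - θ (i - 1) k) *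
          ((if i < j then lam j i else 0) - if j = i then S else 0) := by
    intro j
    rcases lt_trichotomy j i with h | rfl | h
    · simp [ironUpdate, h.not_gt, h.ne, hpred]
    · simp [ironUpdate, hpred, S]
      ring
    · simp [ironUpdate, h, h.ne', hpred]
      ring
  have hupper : ∑ j ∈ Icc 1 n, (if i < j then lam j i else 0) = S := by
    rw [← sum_filter]
    congr 1
    ext j
    simp only [mem_filter, mem_Icc]
    omega
  have hmass : ∑ j ∈ Icc 1 n, ((if i < j then lam j i else 0) - if j = i then S else 0) = 0 := by
    rw [sum_sub_distrib, hupper, sum_ite_eq' _ _, if_pos hi, sub_self]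
  simp only [flowTerm, ← sum_add_distrib, hterm]
  rw [sum_add_distrib (s := Icc 1 n) (g := fun j => (1 - γ) * _ * _), ← mul_sum, hmass, mul_zero,
    add_zero]

theorem flowRev_ironUpdate_of_lt (hi : i ∈ Icc 1 n) (hfi : f i ≠ 0) (hfi' : f (i - 1) ≠ 0)
    (hj : j < i) (k : ℕ) :
    flowRev n θ f (ironUpdate n lam i γ) j k = flowRev n θ f lam j k := by
  have hin := (mem_Icc.1 hi).2
  refine sum_eq_sum_of_eq_off_pair (a := i - 1) (b := i) (mem_Icc.2 ⟨by omega, by omega⟩)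
    (mem_Icc.2 ⟨hj.le, hin⟩) (by omega) (fun m _ h₁ h₂ => by rw [virt_ironUpdate_of_ne h₁ h₂])
    ?_
  simp only [mul_virt_eq_sub_flowTerm hfi, mul_virt_eq_sub_flowTerm hfi']
  linarith [flowTerm_ironUpdate_pred_add_self (θ := θ) (lam := lam) (γ := γ) hi k]

theorem flowRev_ironUpdate_of_gt (hj : i < j) (k : ℕ) :
    flowRev n θ f (ironUpdate n lam i γ) j k = flowRev n θ f lam j k :=
  sum_congr rfl fun m hm => by
    have := (mem_Icc.1 hm).1
    rw [virt_ironUpdate_of_ne (by omega) (by omega)]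

end IronUpdate

theorem iron_update_local_general
    (d n : ℕ)
    (θ : ℕ → ℕ → ℝ) (f : ℕ → ℝ) (hf : IsProb n f)
    (lam : ℕ → ℕ → ℝ) (i : ℕ) (hi : i ∈ Finset.Icc 1 n) (γ : ℝ) :
    ∀ k ∈ Finset.Icc 1 d,
      (∀ j ∈ Finset.Icc 1 n, j ≠ i →
        flowRev n θ f (ironUpdate n lam i γ) j k = flowRev n θ f lam j k) ∧
      (∀ j ∈ Finset.Icc 1 n, j ≠ i - 1 → j ≠ i →
        virt n θ f (ironUpdate n lam i γ) j k = virt n θ f lam j k) := by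
  intro k _
  obtain ⟨hi₁, hin⟩ := mem_Icc.1 hi
  have hf₀ : ∀ m, 1 ≤ m → m ≤ n → f m ≠ 0 := fun m h₁ h₂ => (hf.1 m (mem_Icc.2 ⟨h₁, h₂⟩)).ne'
  refine ⟨fun j hj hji => ?_, fun j _ h₁ h₂ => virt_ironUpdate_of_ne h₁ h₂ k⟩
  rcases hji.lt_or_gt with hlt | hgt
  · have := (mem_Icc.1 hj).1
    exact flowRev_ironUpdate_of_lt hi (hf₀ i hi₁ hin) (hf₀ (i - 1) (by omega) (by omega)) hlt k
  · exact flowRev_ironUpdate_of_gt hgt k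

/-- **Lemma 5 (the ironing update changes pseudo-revenue only at the ironed type)**:
`R_j^{λ'(γ),k} = R_j^{λ,k}` for `j ≠ i`, and `φ_j^{λ'(γ),k} = φ_j^{λ,k}` for
`j ∉ {i−1, i}`. -/
theorem iron_update_local
    (d n : ℕ) (hd : 1 ≤ d) (hn : 1 ≤ n)
    (θ : ℕ → ℕ → ℝ) (f : ℕ → ℝ) (hf : IsProb n f)
    (lam : ℕ → ℕ → ℝ) (i : ℕ) (hi : i ∈ Finset.Icc 1 n) (γ : ℝ) :
    ∀ k ∈ Finset.Icc 1 d,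
      (∀ j ∈ Finset.Icc 1 n, j ≠ i →
        flowRev n θ f (ironUpdate n lam i γ) j k = flowRev n θ f lam j k) ∧
      (∀ j ∈ Finset.Icc 1 n, j ≠ i - 1 → j ≠ i →
        virt n θ f (ironUpdate n lam i γ) j k = virt n θ f lam j k) :=
  iron_update_local_general d n θ f hf lam i hi γ
end
end
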